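/- arXiv:1307.0848 — 11 statements merged into one kernel-verified Lean document; each statement's English description precedes it below -/
import Mathlib

section
/- Let c > 0, δ > 0, and d > 0. Suppose H : [0,d) → ℝ is differentiable with H(0) = 1+δ and H′(s) ≥ c·(H(s)² − 1) for all s ∈ [0,d). Then d ≤ (1/(2c))·log((2+δ)/δ). -/
/-!
Since `H² - 1 ≥ 2 (H - 1)`, the Riccati inequality `H' ≥ c (H² - 1)` gives `(H - 1)' ≥ 2c (H - 1)`, so
`(H - 1) e^{-2ct}` is nondecreasing and `H` stays above `1`. Then `(H - 1)/(H + 1) · e^{-2ct}` is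
nondecreasing too (its derivative is `2 e^{-2ct} (H' - c (H² - 1)) / (H + 1)²`), and as
`(H - 1)/(H + 1) < 1` this gives `δ/(2 + δ) · e^{2ct} < 1` for every `t < d`.
-/

open Real Set

theorem monotoneOn_Ico_of_hasDerivAt_nonneg {f f' : ℝ → ℝ} {a b : ℝ}
    (hf : ∀ x ∈ Ico a b, HasDerivAt f (f' x) x) (hf' : ∀ x ∈ Ico a b, 0 ≤ f' x) :
    MonotoneOn f (Ico a b) :=
  monotoneOn_of_hasDerivWithinAt_nonneg (convex_Ico a b)
    (fun x hx => (hf x hx).continuousAt.continuousWithinAt)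
    (fun x hx => (hf x (interior_subset hx)).hasDerivWithinAt)
    (fun x hx => hf' x (interior_subset hx))

theorem hasDerivAt_exp_neg_mul (a t : ℝ) :
    HasDerivAt (fun s => exp (-(a * s))) (exp (-(a * t)) * -a) t := by
  simpa using ((hasDerivAt_id t).const_mul a).fun_neg.exp

namespace Riccati

variable {H H' : ℝ → ℝ} {c d : ℝ}

theorem sub_one_mul_exp_monotoneOn (hc : 0 ≤ c)
    (hderiv : ∀ s ∈ Ico 0 d, HasDerivAt H (H' s) s)
    (hineq : ∀ s ∈ Ico 0 d, c * (H s ^ 2 - 1) ≤ H' s) :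
    MonotoneOn (fun t => (H t - 1) * exp (-(2 * c * t))) (Ico 0 d) := by
  refine monotoneOn_Ico_of_hasDerivAt_nonneg
    (f' := fun t => exp (-(2 * c * t)) * (H' t - 2 * c * (H t - 1))) (fun t ht => ?_) (fun t ht => ?_)
  · exact (((hderiv t ht).sub_const 1).fun_mul (hasDerivAt_exp_neg_mul (2 * c) t)).congr_deriv
      (by ring)
  · have hsq : 0 ≤ c * (H t - 1) ^ 2 := by positivity
    exact mul_nonneg (exp_pos _).le (by nlinarith [hineq t ht])

theorem one_lt (hc : 0 ≤ c) (h0 : 1 < H 0)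
    (hderiv : ∀ s ∈ Ico 0 d, HasDerivAt H (H' s) s)
    (hineq : ∀ s ∈ Ico 0 d, c * (H s ^ 2 - 1) ≤ H' s) {t : ℝ} (ht : t ∈ Ico 0 d) :
    1 < H t := by
  have hmono := sub_one_mul_exp_monotoneOn hc hderiv hineq ⟨le_rfl, ht.1.trans_lt ht.2⟩ ht ht.1
  simp only [mul_zero, neg_zero, exp_zero, mul_one] at hmono
  by_contra! hle
  nlinarith [exp_pos (-(2 * c * t))]

theorem div_mul_exp_monotoneOn (hc : 0 ≤ c) (h0 : 1 < H 0)
    (hderiv : ∀ s ∈ Ico 0 d, HasDerivAt H (H' s) s)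
    (hineq : ∀ s ∈ Ico 0 d, c * (H s ^ 2 - 1) ≤ H' s) :
    MonotoneOn (fun t => (H t - 1) / (H t + 1) * exp (-(2 * c * t))) (Ico 0 d) := by
  refine monotoneOn_Ico_of_hasDerivAt_nonneg
    (f' := fun t => 2 * exp (-(2 * c * t)) / (H t + 1) ^ 2 * (H' t - c * (H t ^ 2 - 1)))
    (fun t ht => ?_) (fun t ht => mul_nonneg (by positivity) (by linarith [hineq t ht]))
  have hpos : 0 < H t + 1 := by linarith [one_lt hc h0 hderiv hineq ht]
  refine ((((hderiv t ht).sub_const 1).fun_div ((hderiv t ht).add_const 1) hpos.ne').fun_mul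
    (hasDerivAt_exp_neg_mul (2 * c) t)).congr_deriv ?_
  field_simp
  ring

theorem exp_lt (hc : 0 ≤ c) (h0 : 1 < H 0)
    (hderiv : ∀ s ∈ Ico 0 d, HasDerivAt H (H' s) s)
    (hineq : ∀ s ∈ Ico 0 d, c * (H s ^ 2 - 1) ≤ H' s) {t : ℝ} (ht : t ∈ Ico 0 d) :
    exp (2 * c * t) < (H 0 + 1) / (H 0 - 1) := by
  have hmono := div_mul_exp_monotoneOn hc h0 hderiv hineq ⟨le_rfl, ht.1.trans_lt ht.2⟩ ht ht.1
  simp only [mul_zero, neg_zero, exp_zero, mul_one] at hmono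
  have hHt := one_lt hc h0 hderiv hineq ht
  have hratio : (H t - 1) / (H t + 1) < 1 := (div_lt_one (by linarith)).2 (by linarith)
  have hlt : (H 0 - 1) / (H 0 + 1) < exp (-(2 * c * t)) :=
    hmono.trans_lt (mul_lt_of_lt_one_left (exp_pos _) hratio)
  rw [div_lt_iff₀ (by linarith), exp_neg, ← div_eq_inv_mul, lt_div_iff₀ (exp_pos _)] at hlt
  rw [lt_div_iff₀ (by linarith), mul_comm]
  exact hlt

end Riccati

theorem stmt_1 (c δ d : ℝ) (hc : 0 < c) (hδ : 0 < δ) (hd : 0 < d)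
    (H H' : ℝ → ℝ)
    (hderiv : ∀ s ∈ Set.Ico (0 : ℝ) d, HasDerivAt H (H' s) s)
    (h0 : H 0 = 1 + δ)
    (hineq : ∀ s ∈ Set.Ico (0 : ℝ) d, c * ((H s) ^ 2 - 1) ≤ H' s) :
    d ≤ (1 / (2 * c)) * Real.log ((2 + δ) / δ) := by
  have hbound : ∀ s ∈ Ico 0 d, s < 1 / (2 * c) * log ((2 + δ) / δ) := by
    intro s hs
    have hexp := Riccati.exp_lt hc.le (by linarith) hderiv hineq hs
    rw [h0, show 1 + δ + 1 = 2 + δ by ring, add_sub_cancel_left] at hexp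
    rw [one_div_mul_eq_div, lt_div_iff₀ (by positivity), mul_comm s]
    exact (lt_log_iff_exp_lt (by positivity)).2 hexp
  by_contra! hlt
  exact (hbound (max 0 _) ⟨le_max_left _ _, max_lt hd hlt⟩).not_ge (le_max_right _ _)
end

section
/- Let c > 0, l ≥ 0, and h ∈ (−1, 1]. Suppose H : [0,l] → ℝ is differentiable with H(0) ≥ h and H′(s) ≥ c·(H(s)² − 1) for all s ∈ [0,l]. Then H(l) ≥ ((1+h) − (1−h)·e^{2cl}) / ((1+h) + (1−h)·e^{2cl}). -/
open Real Filter Set Topology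

theorem stmt_3 (c l h : ℝ) (hc : 0 < c) (hl : 0 ≤ l) (hh : h ∈ Set.Ioc (-1 : ℝ) 1)
    (H H' : ℝ → ℝ)
    (hderiv : ∀ s ∈ Set.Icc (0 : ℝ) l, HasDerivAt H (H' s) s)
    (h0 : h ≤ H 0)
    (hineq : ∀ s ∈ Set.Icc (0 : ℝ) l, c * ((H s) ^ 2 - 1) ≤ H' s) :
    ((1 + h) - (1 - h) * Real.exp (2 * c * l)) /
      ((1 + h) + (1 - h) * Real.exp (2 * c * l)) ≤ H l := by
  obtain ⟨hh1, hh2⟩ := hh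
  have hcontH : ContinuousOn H (Set.Icc 0 l) := fun s hs =>
    (hderiv s hs).continuousAt.continuousWithinAt
  have hE : ∀ s : ℝ, HasDerivAt (fun t => Real.exp (2 * c * t)) (Real.exp (2 * c * s) * (2 * c)) s := by
    intro s
    have : HasDerivAt (fun t : ℝ => 2 * c * t) (2 * c) s := by
      simpa using (hasDerivAt_id s).const_mul (2 * c)
    exact this.exp
  have hEn : ∀ s : ℝ, HasDerivAt (fun t => Real.exp (-(2 * c) * t))
      (Real.exp (-(2 * c) * s) * (-(2 * c))) s := by
    intro s
    have : HasDerivAt (fun t : ℝ => -(2 * c) * t) (-(2 * c)) s := by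
      simpa using (hasDerivAt_id s).const_mul (-(2 * c))
    exact this.exp
  -- Step 1 : g s = (H s + 1) * exp (2 c s) is monotone on Icc, hence H s > -1.
  have hgderiv : ∀ s ∈ Set.Icc (0 : ℝ) l, HasDerivAt (fun t => (H t + 1) * Real.exp (2 * c * t))
      (H' s * Real.exp (2 * c * s) + (H s + 1) * (Real.exp (2 * c * s) * (2 * c))) s := by
    intro s hs
    exact ((hderiv s hs).add_const 1).mul (hE s)
  have hgmono : MonotoneOn (fun t => (H t + 1) * Real.exp (2 * c * t)) (Set.Icc 0 l) := by
    apply monotoneOn_of_hasDerivWithinAt_nonneg (convex_Icc 0 l)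
      (fun s hs => (hgderiv s hs).continuousAt.continuousWithinAt)
      (f' := fun s => H' s * Real.exp (2 * c * s) + (H s + 1) * (Real.exp (2 * c * s) * (2 * c)))
      (fun s hs => ((hgderiv s (interior_subset hs)).hasDerivWithinAt))
    intro s hs
    rw [interior_Icc] at hs
    have hs' : s ∈ Set.Icc (0 : ℝ) l := Set.mem_Icc_of_Ioo hs
    have h1 := hineq s hs'
    have h2 := Real.exp_pos (2 * c * s)
    nlinarith [mul_le_mul_of_nonneg_left h1 h2.le, mul_nonneg (mul_nonneg h2.le hc.le) (sq_nonneg (H s + 1))]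
  have hHgt : ∀ s ∈ Set.Icc (0 : ℝ) l, -1 < H s := by
    intro s hs
    have h0mem : (0 : ℝ) ∈ Set.Icc (0 : ℝ) l := ⟨le_refl 0, hl⟩
    have := hgmono h0mem hs hs.1
    simp only [mul_zero, Real.exp_zero, mul_one] at this
    have hEp := Real.exp_pos (2 * c * s)
    nlinarith
  -- Step 2 : ψ s = (1 - H s) * exp (-(2c) s) / (1 + H s) is antitone on Icc.
  set ψ : ℝ → ℝ := fun t => (1 - H t) * Real.exp (-(2 * c) * t) / (1 + H t) with hψdef
  have hψderiv : ∀ s ∈ Set.Icc (0 : ℝ) l, HasDerivAt ψ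
      (((-H' s * Real.exp (-(2 * c) * s) + (1 - H s) * (Real.exp (-(2 * c) * s) * (-(2 * c)))) *
          (1 + H s) - (1 - H s) * Real.exp (-(2 * c) * s) * H' s) / (1 + H s) ^ 2) s := by
    intro s hs
    have hne : 1 + H s ≠ 0 := by have := hHgt s hs; linarith
    have hnum : HasDerivAt (fun t => (1 - H t) * Real.exp (-(2 * c) * t))
        (-H' s * Real.exp (-(2 * c) * s) + (1 - H s) * (Real.exp (-(2 * c) * s) * (-(2 * c)))) s :=
      ((hderiv s hs).const_sub 1).mul (hEn s)
    exact hnum.div ((hderiv s hs).const_add 1) hne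
  have hψanti : AntitoneOn ψ (Set.Icc 0 l) := by
    apply antitoneOn_of_hasDerivWithinAt_nonpos (convex_Icc 0 l)
      (fun s hs => (hψderiv s hs).continuousAt.continuousWithinAt)
      (fun s hs => ((hψderiv s (interior_subset hs)).hasDerivWithinAt))
    intro s hs
    rw [interior_Icc] at hs
    have hs' : s ∈ Set.Icc (0 : ℝ) l := Set.mem_Icc_of_Ioo hs
    have h1 := hineq s hs'
    have h2 := Real.exp_pos (-(2 * c) * s)
    have h3 : -1 < H s := hHgt s hs'
    apply div_nonpos_of_nonpos_of_nonneg _ (sq_nonneg _)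
    nlinarith [mul_pos h2 (show (0:ℝ) < 1 + H s by linarith)]
  -- Conclude.
  have h0mem : (0 : ℝ) ∈ Set.Icc (0 : ℝ) l := ⟨le_refl 0, hl⟩
  have hlmem : l ∈ Set.Icc (0 : ℝ) l := ⟨hl, le_refl l⟩
  have hkey : ψ l ≤ ψ 0 := hψanti h0mem hlmem hl
  have hH0 : -1 < H 0 := hHgt 0 h0mem
  have hHl : -1 < H l := hHgt l hlmem
  have hψ0 : ψ 0 = (1 - H 0) / (1 + H 0) := by simp [hψdef]
  have hψ0le : ψ 0 ≤ (1 - h) / (1 + h) := by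
    rw [hψ0, div_le_div_iff₀ (by linarith) (by linarith)]
    nlinarith
  have hψl : (1 - H l) * Real.exp (-(2 * c) * l) / (1 + H l) ≤ (1 - h) / (1 + h) :=
    le_trans hkey hψ0le
  have hEl : Real.exp (-(2 * c) * l) = (Real.exp (2 * c * l))⁻¹ := by
    rw [← Real.exp_neg]; ring_nf
  have hEp : (0 : ℝ) < Real.exp (2 * c * l) := Real.exp_pos _
  rw [hEl] at hψl
  rw [div_le_div_iff₀ (by linarith) (by linarith)] at hψl
  have hstep : (1 - H l) * (1 + h) ≤ (1 - h) * (1 + H l) * Real.exp (2 * c * l) := by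
    have := mul_le_mul_of_nonneg_right hψl hEp.le
    calc (1 - H l) * (1 + h) = (1 - H l) * (Real.exp (2 * c * l))⁻¹ * (1 + h) * Real.exp (2 * c * l) := by
          field_simp
      _ ≤ (1 - h) * (1 + H l) * Real.exp (2 * c * l) := by
          exact mul_le_mul_of_nonneg_right hψl hEp.le
  have hD : (0 : ℝ) < (1 + h) + (1 - h) * Real.exp (2 * c * l) := by nlinarith
  rw [div_le_iff₀ hD]
  nlinarith
end

section
/- Let N > 2 be a real number, set c* = (N−2)^{(N−2)/2} / N^{(N+2)/2} and a = √((N−2)/N), and define F(v) = (v²−1)/N + 2c*·v^{2−N} for v > 0. Then F(a) = 0, F′(a) = 0, and F(v) > 0 for every v ∈ (0,∞) with v ≠ a. -/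
open Real Filter Set Topology

theorem stmt_11 (N : ℝ) (hN : 2 < N)
    (cs a : ℝ) (hcs : cs = (N - 2) ^ ((N - 2) / 2) / N ^ ((N + 2) / 2))
    (ha : a = Real.sqrt ((N - 2) / N))
    (F : ℝ → ℝ) (hF : ∀ v, F v = (v ^ 2 - 1) / N + 2 * cs * v ^ (2 - N)) :
    F a = 0 ∧ HasDerivAt F 0 a ∧ ∀ v : ℝ, 0 < v → v ≠ a → 0 < F v := by
  have hN0 : (0:ℝ) < N := by linarith
  have hN2 : (0:ℝ) < N - 2 := by linarith
  have hb : (0:ℝ) < (N - 2) / N := div_pos hN2 hN0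
  have ha0 : 0 < a := by rw [ha]; exact Real.sqrt_pos.mpr hb
  have ha2 : a ^ 2 = (N - 2) / N := by rw [ha, Real.sq_sqrt hb.le]
  have hcs0 : 0 < cs := by
    rw [hcs]; exact div_pos (Real.rpow_pos_of_pos hN2 _) (Real.rpow_pos_of_pos hN0 _)
  have harp : a ^ (2 - N) = (N - 2) ^ ((2 - N) / 2) / N ^ ((2 - N) / 2) := by
    rw [ha, Real.sqrt_eq_rpow, ← Real.rpow_mul hb.le,
      show (1 / (2:ℝ)) * (2 - N) = (2 - N) / 2 from by ring,
      Real.div_rpow hN2.le hN0.le]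
  have hA : (N - 2) ^ ((N - 2) / 2) * (N - 2) ^ ((2 - N) / 2) = 1 := by
    rw [← Real.rpow_add hN2, show (N - 2) / 2 + (2 - N) / 2 = (0:ℝ) from by ring,
      Real.rpow_zero]
  have hB : N ^ ((N + 2) / 2) * N ^ ((2 - N) / 2) = N ^ 2 := by
    rw [← Real.rpow_add hN0, show (N + 2) / 2 + (2 - N) / 2 = ((2:ℕ):ℝ) from by push_cast; ring,
      Real.rpow_natCast]
  have key : 2 * cs * a ^ (2 - N) = 2 / N ^ 2 := by
    have h : (N - 2) ^ ((N - 2) / 2) / N ^ ((N + 2) / 2) *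
        ((N - 2) ^ ((2 - N) / 2) / N ^ ((2 - N) / 2)) = 1 / N ^ 2 := by
      rw [div_mul_div_comm, hA, hB]
    rw [hcs, harp, mul_assoc, h]
    ring
  have harp1 : a ^ (2 - N - 1) = a ^ (2 - N) / a := by
    rw [Real.rpow_sub ha0, Real.rpow_one]
  set G : ℝ → ℝ := fun v => 2 * v / N + 2 * cs * ((2 - N) * v ^ (2 - N - 1)) with hGdef
  have hFd : ∀ v : ℝ, v ≠ 0 → HasDerivAt F (G v) v := by
    intro v hv
    have h1 : HasDerivAt (fun v : ℝ => (v ^ 2 - 1) / N) (2 * v / N) v := by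
      simpa using ((hasDerivAt_pow 2 v).sub_const 1).div_const N
    have h2 : HasDerivAt (fun v : ℝ => 2 * cs * v ^ (2 - N))
        (2 * cs * ((2 - N) * v ^ (2 - N - 1))) v :=
      (Real.hasDerivAt_rpow_const (Or.inl hv)).const_mul _
    have hFe : F = fun v => (v ^ 2 - 1) / N + 2 * cs * v ^ (2 - N) := funext hF
    rw [hFe]
    exact h1.add h2
  have haN : a ^ 2 * N = N - 2 := by rw [ha2]; field_simp
  have hGa : G a = 0 := by
    show 2 * a / N + 2 * cs * ((2 - N) * a ^ (2 - N - 1)) = 0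
    rw [harp1]
    have h2 : 2 * cs * ((2 - N) * (a ^ (2 - N) / a)) =
        (2 - N) / a * (2 * cs * a ^ (2 - N)) := by ring
    rw [h2, key]
    field_simp
    nlinarith [haN]
  have hFa : F a = 0 := by
    rw [hF a, key, ha2]
    field_simp
    ring
  have hGd : ∀ v : ℝ, v ≠ 0 →
      HasDerivAt G (2 / N + 2 * cs * ((2 - N) * ((2 - N - 1) * v ^ (2 - N - 1 - 1)))) v := by
    intro v hv
    have h1 : HasDerivAt (fun v : ℝ => 2 * v / N) (2 / N) v := by
      simpa using ((hasDerivAt_id v).const_mul (2:ℝ)).div_const N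
    have h2 := (((Real.hasDerivAt_rpow_const (p := 2 - N - 1)
      (Or.inl hv))).const_mul (2 - N)).const_mul (2 * cs)
    exact h1.add h2
  have hpos : ∀ v ∈ interior (Ioi (0:ℝ)), 0 < deriv G v := by
    intro v hv
    rw [interior_Ioi] at hv
    rw [(hGd v (ne_of_gt hv)).deriv]
    have h3 : (0:ℝ) < v ^ (2 - N - 1 - 1) := Real.rpow_pos_of_pos hv _
    have h4 : (0:ℝ) < (2 - N) * (2 - N - 1) := by nlinarith
    have h5 : (0:ℝ) < 2 / N := by positivity
    nlinarith [mul_pos (mul_pos (mul_pos two_pos hcs0) h4) h3]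
  have hGmono : StrictMonoOn G (Ioi 0) :=
    strictMonoOn_of_deriv_pos (convex_Ioi 0)
      (fun v hv => ((hGd v (ne_of_gt hv)).continuousAt.continuousWithinAt)) hpos
  have hGneg : ∀ v ∈ Ioo (0:ℝ) a, G v < 0 := by
    intro v hv
    have := hGmono (mem_Ioi.mpr hv.1) (mem_Ioi.mpr ha0) hv.2
    rwa [hGa] at this
  have hGpos : ∀ v ∈ Ioi a, 0 < G v := by
    intro v hv
    have := hGmono (mem_Ioi.mpr ha0) (mem_Ioi.mpr (lt_trans ha0 hv)) hv
    rwa [hGa] at this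
  have hanti : StrictAntiOn F (Ioc 0 a) := by
    refine strictAntiOn_of_deriv_neg (convex_Ioc 0 a)
      (fun v hv => (hFd v (ne_of_gt hv.1)).continuousAt.continuousWithinAt) ?_
    intro v hv
    rw [interior_Ioc] at hv
    rw [(hFd v (ne_of_gt hv.1)).deriv]
    exact hGneg v hv
  have hmono2 : StrictMonoOn F (Ici a) := by
    refine strictMonoOn_of_deriv_pos (convex_Ici a)
      (fun v hv => (hFd v (ne_of_gt (lt_of_lt_of_le ha0 hv))).continuousAt.continuousWithinAt) ?_
    intro v hv
    rw [interior_Ici] at hv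
    rw [(hFd v (ne_of_gt (lt_trans ha0 hv))).deriv]
    exact hGpos v hv
  refine ⟨hFa, hGa ▸ hFd a ha0.ne', fun v hv hva => ?_⟩
  rcases lt_or_gt_of_ne hva with h | h
  · have := hanti ⟨hv, h.le⟩ ⟨ha0, le_refl a⟩ h
    rwa [hFa] at this
  · have := hmono2 self_mem_Ici (mem_Ici.mpr h.le) h
    rwa [hFa] at this
end

section
/- Let N > 2 be a real number and set c* = (N−2)^{(N−2)/2} / N^{(N+2)/2}. For c > 0 define F_c(v) = (v²−1)/N + 2c·v^{2−N} for v > 0, and set a_c = sup({0} ∪ {v ∈ (0,1] : F_c(v) ≤ 0}). Then F_c(v) > 0 for all v ∈ (a_c, 1), and the function v ↦ 1/√(F_c(v)) fails to be Lebesgue integrable on (a_c, 1) if and only if c = c*. -/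
/-!
Write `F = F_c`. Its derivative `F'(v) = 2v/N - 2c(N-2)v^(1-N)` is strictly increasing, so `F` is
strictly convex on `(0, ∞)`. At `a = √((N-2)/N)` one checks `F_{c*}(a) = F_{c*}'(a) = 0`, hence
`F_{c*} > 0` away from `a`, and `F_c = F_{c*} + 2(c - c*)v^(2-N)`.

* `c > c*`: `F_c ≥ 2(c - c*) > 0` on `(0, 1]`, so `a_c = 0` and `1/√F_c` is bounded.
* `c < c*`: `F_c(a) < 0 < F_c(1)`; by convexity the zero `b ∈ (a, 1)` is simple, so
  `F_c(v) ≥ m(v - b)` for `v ≥ b` and `1/√F_c ≲ (v - b)^(-1/2)` is integrable.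
* `c = c*`: the double zero gives `F_{c*}(v) ≤ M(v - a)²`, so `1/√F_{c*} ≳ 1/(v - a)`,
  which is not integrable.
-/

open Real Set MeasureTheory

lemma integrableOn_one_div_sqrt_of_mul_sub_le {f : ℝ → ℝ} {b e m : ℝ} (hf : Measurable f)
    (hbe : b ≤ e) (hm : 0 < m) (h : ∀ v ∈ Ioo b e, m * (v - b) ≤ f v) :
    IntegrableOn (fun v => 1 / √(f v)) (Ioo b e) := by
  have hdom : IntegrableOn (fun v => (√m)⁻¹ * (v - b) ^ (-(1 / 2) : ℝ)) (Ioo b e) := by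
    have h := (intervalIntegral.intervalIntegrable_rpow' (by norm_num : (-1 : ℝ) < -(1 / 2))
      (a := 0) (b := e - b)).comp_sub_right b
    rw [zero_add, sub_add_cancel] at h
    exact ((intervalIntegrable_iff_integrableOn_Ioo_of_le hbe).1 h).const_mul _
  refine hdom.mono' (measurable_const.div hf.sqrt).aestronglyMeasurable ?_
  rw [ae_restrict_iff' measurableSet_Ioo]
  filter_upwards with v hv
  have hvb : 0 < v - b := sub_pos.2 hv.1
  rw [norm_of_nonneg (by positivity), rpow_neg hvb.le, ← sqrt_eq_rpow, ← mul_inv,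
    ← sqrt_mul hm.le, one_div]
  exact inv_anti₀ (by positivity) (sqrt_le_sqrt (h v hv))

lemma not_integrableOn_one_div_sqrt_of_le_mul_sq {f : ℝ → ℝ} {a e M : ℝ} (hae : a < e)
    (hM : 0 < M) (hpos : ∀ v ∈ Ioo a e, 0 < f v) (h : ∀ v ∈ Ioo a e, f v ≤ M * (v - a) ^ 2) :
    ¬ IntegrableOn (fun v => 1 / √(f v)) (Ioo a e) := by
  intro hint
  have hinv : IntegrableOn (fun v => (v - a)⁻¹) (Ioo a e) := by
    refine (hint.const_mul √M).mono' (by fun_prop) ?_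
    rw [ae_restrict_iff' measurableSet_Ioo]
    filter_upwards with v hv
    have hva : 0 < v - a := sub_pos.2 hv.1
    have hsqrt : √(f v) ≤ √M * (v - a) := by
      simpa only [sqrt_mul hM.le, sqrt_sq hva.le] using sqrt_le_sqrt (h v hv)
    rw [norm_of_nonneg (inv_nonneg.2 hva.le), mul_one_div, le_div_iff₀ (sqrt_pos.2 (hpos v hv))]
    calc (v - a)⁻¹ * √(f v) ≤ (v - a)⁻¹ * (√M * (v - a)) := by gcongr
      _ = √M := by field_simp
  have := (intervalIntegrable_iff_integrableOn_Ioo_of_le hae.le).2 hinv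
  rw [intervalIntegrable_sub_inv_iff] at this
  rcases this with h | h
  · exact hae.ne h
  · exact h left_mem_uIcc

lemma le_of_hasDerivAt_le {f f' g g' : ℝ → ℝ} {a b : ℝ}
    (hf : ∀ x ∈ Icc a b, HasDerivAt f (f' x) x) (hg : ∀ x ∈ Icc a b, HasDerivAt g (g' x) x)
    (ha : f a ≤ g a) (h : ∀ x ∈ Ico a b, f' x ≤ g' x) : ∀ x ∈ Icc a b, f x ≤ g x :=
  fun _ hx => image_le_of_deriv_right_le_deriv_boundary
    (fun y hy => (hf y hy).continuousAt.continuousWithinAt)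
    (fun y hy => (hf y (Ico_subset_Icc_self hy)).hasDerivWithinAt) ha
    (fun y hy => (hg y hy).continuousAt.continuousWithinAt)
    (fun y hy => (hg y (Ico_subset_Icc_self hy)).hasDerivWithinAt) h hx

lemma StrictConvexOn.lt_of_hasDerivAt_eq_zero {f : ℝ → ℝ} {s : Set ℝ} {a x : ℝ}
    (hf : StrictConvexOn ℝ s f) (ha : a ∈ s) (hx : x ∈ s) (hxa : x ≠ a) (hf' : HasDerivAt f 0 a) :
    f a < f x := by
  rcases hxa.lt_or_gt with hlt | hgt
  · have := hf.slope_lt_of_hasDerivAt hx ha hlt hf'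
    rw [slope_def_field, div_lt_iff₀ (sub_pos.2 hlt)] at this
    linarith
  · have := hf.lt_slope_of_hasDerivAt ha hx hgt hf'
    rw [slope_def_field, lt_div_iff₀ (sub_pos.2 hgt)] at this
    linarith

def nonposSet (f : ℝ → ℝ) : Set ℝ := {0} ∪ {v ∈ Ioc (0 : ℝ) 1 | f v ≤ 0}

lemma csSup_nonposSet_eq {f : ℝ → ℝ} {b : ℝ} (hb : b ∈ nonposSet f)
    (hpos : ∀ v ∈ Ioc b 1, 0 < f v) : sSup (nonposSet f) = b := by
  have hb0 : 0 ≤ b := by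
    rcases hb with rfl | ⟨hb, -⟩
    exacts [le_rfl, hb.1.le]
  refine IsGreatest.csSup_eq ⟨hb, ?_⟩
  rintro x (rfl | ⟨hx, hfx⟩)
  · exact hb0
  · by_contra! hbx
    exact (hpos x ⟨hbx, hx.2⟩).not_ge hfx

namespace QuasiEinstein

noncomputable def F (N c v : ℝ) : ℝ := (v ^ 2 - 1) / N + 2 * c * v ^ (2 - N)

noncomputable def F' (N c v : ℝ) : ℝ := 2 * v / N - 2 * c * (N - 2) * v ^ (1 - N)

noncomputable def F'' (N c v : ℝ) : ℝ := 2 / N + 2 * c * (N - 2) * (N - 1) * v ^ (-N)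

noncomputable def cstar (N : ℝ) : ℝ := (N - 2) ^ ((N - 2) / 2) / N ^ ((N + 2) / 2)

noncomputable def vstar (N : ℝ) : ℝ := √((N - 2) / N)

variable {N c v : ℝ}

lemma hasDerivAt_F (hv : 0 < v) : HasDerivAt (F N c) (F' N c v) v := by
  refine ((((hasDerivAt_pow 2 v).sub_const 1).div_const N).add
    ((hasDerivAt_rpow_const (p := 2 - N) (Or.inl hv.ne')).const_mul (2 * c))).congr_deriv ?_
  rw [F', show 2 - N - 1 = 1 - N by ring]
  push_cast
  ring

lemma hasDerivAt_F' (hv : 0 < v) : HasDerivAt (F' N c) (F'' N c v) v := by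
  refine ((((hasDerivAt_id v).const_mul 2).div_const N).sub
    ((hasDerivAt_rpow_const (p := 1 - N) (Or.inl hv.ne')).const_mul (2 * c * (N - 2)))
    ).congr_deriv ?_
  rw [F'', show 1 - N - 1 = -N by ring]
  ring

lemma measurable_F : Measurable (F N c) := by
  unfold F
  fun_prop

lemma continuousOn_F : ContinuousOn (F N c) (Ioi 0) :=
  fun _ hv => (hasDerivAt_F hv).continuousAt.continuousWithinAt

lemma F''_pos (hN : 2 ≤ N) (hc : 0 ≤ c) (hv : 0 < v) : 0 < F'' N c v := by
  have hk : 0 ≤ 2 * c * (N - 2) * (N - 1) :=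
    mul_nonneg (mul_nonneg (by positivity) (by linarith)) (by linarith)
  have := mul_nonneg hk (rpow_pos_of_pos hv (-N)).le
  rw [F'']
  have : 0 < 2 / N := div_pos two_pos (by linarith)
  linarith

lemma F_eq_add (c' : ℝ) : F N c v = F N c' v + 2 * (c - c') * v ^ (2 - N) := by
  simp only [F]
  ring

lemma F_one : F N c 1 = 2 * c := by simp [F]

lemma strictMonoOn_F' (hN : 2 ≤ N) (hc : 0 ≤ c) : StrictMonoOn (F' N c) (Ioi 0) := by
  intro x hx y hy hxy
  have hpow : y ^ (1 - N) ≤ x ^ (1 - N) := rpow_le_rpow_of_nonpos hx hxy.le (by linarith)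
  have hlin : 2 * x / N < 2 * y / N := by gcongr
  have hk : 0 ≤ 2 * c * (N - 2) := mul_nonneg (by positivity) (by linarith)
  simp only [F']
  nlinarith [mul_le_mul_of_nonneg_left hpow hk]

lemma strictConvexOn_F (hN : 2 ≤ N) (hc : 0 ≤ c) : StrictConvexOn ℝ (Ioi 0) (F N c) := by
  refine StrictMonoOn.strictConvexOn_of_deriv (convex_Ioi 0) continuousOn_F ?_
  rw [interior_Ioi]
  exact (strictMonoOn_F' hN hc).congr fun v hv => (hasDerivAt_F hv).deriv.symm

lemma cstar_pos (hN : 2 < N) : 0 < cstar N :=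
  div_pos (rpow_pos_of_pos (by linarith) _) (rpow_pos_of_pos (by linarith) _)

lemma vstar_pos (hN : 2 < N) : 0 < vstar N :=
  sqrt_pos.2 (div_pos (by linarith) (by linarith))

lemma vstar_lt_one (hN : 2 < N) : vstar N < 1 := by
  rw [vstar, sqrt_lt' one_pos, one_pow, div_lt_one (by linarith)]
  linarith

lemma vstar_sq (hN : 2 ≤ N) : vstar N ^ 2 = (N - 2) / N :=
  sq_sqrt (div_nonneg (by linarith) (by linarith))

lemma vstar_rpow (hN : 2 < N) : vstar N ^ N = N * (N - 2) * cstar N := by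
  have hN0 : 0 < N := by linarith
  have hN2 : 0 < N - 2 := by linarith
  have hN' : N ^ ((N + 2) / 2) = N ^ ((N - 2) / 2) * N ^ 2 := by
    rw [← rpow_natCast, ← rpow_add hN0]
    congr 1
    push_cast
    ring
  rw [vstar, sqrt_eq_rpow, ← rpow_mul (div_nonneg hN2.le hN0.le), div_rpow hN2.le hN0.le, cstar,
    show 1 / 2 * N = (N - 2) / 2 + 1 by ring, rpow_add hN2, rpow_add hN0, rpow_one, rpow_one, hN']
  field_simp

lemma F'_cstar_vstar (hN : 2 < N) : F' N (cstar N) (vstar N) = 0 := by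
  have ha := vstar_pos hN
  have hc := cstar_pos hN
  have hN2 : N - 2 ≠ 0 := by linarith
  have hN0 : N ≠ 0 := by linarith
  rw [F', rpow_sub ha, rpow_one, vstar_rpow hN]
  field_simp
  ring

lemma F_cstar_vstar (hN : 2 < N) : F N (cstar N) (vstar N) = 0 := by
  have ha := vstar_pos hN
  have hc := cstar_pos hN
  have hN2 : N - 2 ≠ 0 := by linarith
  have hN0 : N ≠ 0 := by linarith
  rw [F, rpow_sub ha, rpow_two, vstar_rpow hN, vstar_sq hN.le]
  field_simp
  ring

lemma F_cstar_pos (hN : 2 < N) (hv : 0 < v) (hva : v ≠ vstar N) : 0 < F N (cstar N) v := by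
  have hF' := hasDerivAt_F (N := N) (c := cstar N) (vstar_pos hN)
  rw [F'_cstar_vstar hN] at hF'
  simpa only [F_cstar_vstar hN] using
    (strictConvexOn_F hN.le (cstar_pos hN).le).lt_of_hasDerivAt_eq_zero (vstar_pos hN) hv hva hF'

lemma F_cstar_nonneg (hN : 2 < N) (hv : 0 < v) : 0 ≤ F N (cstar N) v := by
  rcases eq_or_ne v (vstar N) with rfl | hva
  · exact (F_cstar_vstar hN).ge
  · exact (F_cstar_pos hN hv hva).le

lemma F_cstar_le_mul_sq (hN : 2 < N) :
    ∀ v ∈ Icc (vstar N) 1,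
      F N (cstar N) v ≤ F'' N (cstar N) (vstar N) / 2 * (v - vstar N) ^ 2 := by
  set a := vstar N
  set K := F'' N (cstar N) a
  have ha := vstar_pos hN
  have hF'' : ∀ x ∈ Ico a 1, F'' N (cstar N) x ≤ K := fun x hx => by
    have hpow : x ^ (-N) ≤ a ^ (-N) := rpow_le_rpow_of_nonpos ha hx.1 (by linarith)
    have hk : 0 ≤ 2 * cstar N * (N - 2) * (N - 1) :=
      mul_nonneg (mul_nonneg (by linarith [cstar_pos hN]) (by linarith)) (by linarith)
    simp only [K, F'']
    nlinarith [mul_le_mul_of_nonneg_left hpow hk]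
  have hF' : ∀ x ∈ Icc a 1, F' N (cstar N) x ≤ K * (x - a) :=
    le_of_hasDerivAt_le (g' := fun _ => K) (fun x hx => hasDerivAt_F' (ha.trans_le hx.1))
      (fun x _ => by simpa using ((hasDerivAt_id x).sub_const a).const_mul K)
      (by simp [a, F'_cstar_vstar hN]) hF''
  refine le_of_hasDerivAt_le (g := fun x => K / 2 * (x - a) ^ 2) (g' := fun x => K * (x - a))
    (fun x hx => hasDerivAt_F (ha.trans_le hx.1))
    (fun x _ => ((((hasDerivAt_id x).sub_const a).pow 2).const_mul (K / 2)).congr_deriv ?_)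
    (by simp [a, F_cstar_vstar hN]) fun x hx => hF' x (Ico_subset_Icc_self hx)
  simp
  ring

lemma two_mul_sub_cstar_le_F (hN : 2 < N) (hc : cstar N < c) (hv : v ∈ Ioc 0 1) :
    2 * (c - cstar N) ≤ F N c v := by
  have hpow : 1 ≤ v ^ (2 - N) := one_le_rpow_of_pos_of_le_one_of_nonpos hv.1 hv.2 (by linarith)
  rw [F_eq_add (cstar N)]
  nlinarith [F_cstar_nonneg hN hv.1]

lemma exists_simple_zero_of_lt_cstar (hN : 2 < N) (hc : 0 < c) (hlt : c < cstar N) :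
    ∃ b ∈ Ioo 0 1, F N c b = 0 ∧ ∃ m > 0, ∀ v ≥ b, m * (v - b) ≤ F N c v := by
  set a := vstar N
  have ha : 0 < a := vstar_pos hN
  have hFa : F N c a < 0 := by
    rw [F_eq_add (cstar N), F_cstar_vstar hN, zero_add]
    nlinarith [rpow_pos_of_pos ha (2 - N)]
  obtain ⟨b, ⟨hab, hb1⟩, hFb⟩ := intermediate_value_Ioo (vstar_lt_one hN).le
    (continuousOn_F.mono fun v hv => ha.trans_le hv.1) ⟨hFa, F_one.trans_gt (by linarith)⟩
  have hb : 0 < b := ha.trans hab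
  have hconv := strictConvexOn_F hN.le hc.le
  -- the chord from `(a, F a)` to `(b, 0)` has positive slope, so the zero at `b` is simple
  have hm : 0 < F' N c b := by
    have := hconv.slope_lt_of_hasDerivAt ha hb hab (hasDerivAt_F hb)
    rw [slope_def_field, hFb] at this
    exact (div_pos (by linarith) (sub_pos.2 hab)).trans this
  refine ⟨b, ⟨hb, hb1⟩, hFb, F' N c b, hm, fun v hv => ?_⟩
  rcases hv.eq_or_lt with rfl | hbv
  · simp [hFb]
  · have := hconv.lt_slope_of_hasDerivAt hb (hb.trans hbv) hbv (hasDerivAt_F hb)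
    rw [slope_def_field, hFb, sub_zero, lt_div_iff₀ (sub_pos.2 hbv)] at this
    exact this.le

lemma exists_threshold_of_lt_cstar (hN : 2 < N) (hc : 0 < c) (hlt : c < cstar N) :
    ∃ b ∈ nonposSet (F N c), (∀ v ∈ Ioc b 1, 0 < F N c v) ∧
      IntegrableOn (fun v => 1 / √(F N c v)) (Ioo b 1) := by
  obtain ⟨b, hb, hFb, m, hm, hlin⟩ := exists_simple_zero_of_lt_cstar hN hc hlt
  exact ⟨b, Or.inr ⟨Ioo_subset_Ioc_self hb, hFb.le⟩,
    fun v hv => (mul_pos hm (sub_pos.2 hv.1)).trans_le (hlin v hv.1.le),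
    integrableOn_one_div_sqrt_of_mul_sub_le measurable_F hb.2.le hm fun v hv => hlin v hv.1.le⟩

lemma exists_threshold_cstar (hN : 2 < N) :
    ∃ b ∈ nonposSet (F N (cstar N)), (∀ v ∈ Ioc b 1, 0 < F N (cstar N) v) ∧
      ¬ IntegrableOn (fun v => 1 / √(F N (cstar N) v)) (Ioo b 1) := by
  have ha := vstar_pos hN
  have hpos : ∀ v ∈ Ioc (vstar N) 1, 0 < F N (cstar N) v :=
    fun v hv => F_cstar_pos hN (ha.trans hv.1) hv.1.ne'
  refine ⟨vstar N, Or.inr ⟨⟨ha, (vstar_lt_one hN).le⟩, (F_cstar_vstar hN).le⟩, hpos, ?_⟩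
  exact not_integrableOn_one_div_sqrt_of_le_mul_sq (vstar_lt_one hN)
    (half_pos (F''_pos hN.le (cstar_pos hN).le ha)) (fun v hv => hpos v (Ioo_subset_Ioc_self hv))
    fun v hv => F_cstar_le_mul_sq hN v (Ioo_subset_Icc_self hv)

lemma exists_threshold_of_cstar_lt (hN : 2 < N) (hgt : cstar N < c) :
    ∃ b ∈ nonposSet (F N c), (∀ v ∈ Ioc b 1, 0 < F N c v) ∧
      IntegrableOn (fun v => 1 / √(F N c v)) (Ioo b 1) := by
  have hm : 0 < 2 * (c - cstar N) := by linarith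
  refine ⟨0, Or.inl rfl, fun v hv => hm.trans_le (two_mul_sub_cstar_le_F hN hgt hv), ?_⟩
  refine integrableOn_one_div_sqrt_of_mul_sub_le measurable_F zero_le_one hm fun v hv => ?_
  nlinarith [two_mul_sub_cstar_le_F hN hgt (Ioo_subset_Ioc_self hv), hv.2]

lemma exists_threshold (hN : 2 < N) (hc : 0 < c) :
    ∃ b ∈ nonposSet (F N c), (∀ v ∈ Ioc b 1, 0 < F N c v) ∧
      (¬ IntegrableOn (fun v => 1 / √(F N c v)) (Ioo b 1) ↔ c = cstar N) := by
  rcases lt_trichotomy c (cstar N) with hlt | rfl | hgt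
  · obtain ⟨b, hb, hpos, hint⟩ := exists_threshold_of_lt_cstar hN hc hlt
    exact ⟨b, hb, hpos, iff_of_false (not_not_intro hint) hlt.ne⟩
  · obtain ⟨b, hb, hpos, hint⟩ := exists_threshold_cstar hN
    exact ⟨b, hb, hpos, iff_of_true hint rfl⟩
  · obtain ⟨b, hb, hpos, hint⟩ := exists_threshold_of_cstar_lt hN hgt
    exact ⟨b, hb, hpos, iff_of_false (not_not_intro hint) hgt.ne'⟩

end QuasiEinstein

theorem stmt_12 (N : ℝ) (hN : 2 < N) (c : ℝ) (hc : 0 < c)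
    (cs : ℝ) (hcs : cs = (N - 2) ^ ((N - 2) / 2) / N ^ ((N + 2) / 2))
    (F : ℝ → ℝ) (hF : ∀ v, F v = (v ^ 2 - 1) / N + 2 * c * v ^ (2 - N))
    (ac : ℝ) (hac : ac = sSup ({0} ∪ {v ∈ Set.Ioc (0 : ℝ) 1 | F v ≤ 0})) :
    (∀ v ∈ Set.Ioo ac 1, 0 < F v) ∧
    (¬ MeasureTheory.IntegrableOn (fun v => 1 / Real.sqrt (F v)) (Set.Ioo ac 1) ↔ c = cs) := by
  obtain rfl : F = QuasiEinstein.F N c := funext hF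
  obtain ⟨b, hb, hpos, hint⟩ := QuasiEinstein.exists_threshold hN hc
  obtain rfl : ac = b := hac.trans (csSup_nonposSet_eq hb hpos)
  exact ⟨fun v hv => hpos v (Ioo_subset_Ioc_self hv), hcs ▸ hint⟩
end

section
/- Let N > 2 be a real number and c > 0, and define F(v) = (v²−1)/N + 2c·v^{2−N} for v > 0. For v large enough that F(v) > 0, define G(v) = F′(v)/(2√(F(v))) + (N−1)·√(F(v))/v. Then the limit as v → ∞ of (√N − G(v))·v² equals (N−2)/(2√N). -/
open Real Filter Set Topology

/-!
With `T = √(v² + 2cNq - 1)` and `q = v^(2-N)` one has `√F = T/√N`, and clearing denominators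
using `T - v = (2cNq - 1)/(T + v)` gives the exact identity
`(√N - G v)·v² = (v/T)·(N·(v/(T+v))·(2cNq - 1) + (N - 1) - cN²q)/√N`.
Since `N > 2` we have `q → 0`, hence `T/v → 1`, and the right side tends to `(N·½·(-1) + N - 1)/√N`.
-/

theorem hasDerivAt_sq_sub_one_div_add_rpow (N c : ℝ) {v : ℝ} (hv : v ≠ 0) :
    HasDerivAt (fun x : ℝ => (x ^ 2 - 1) / N + 2 * c * x ^ (2 - N))
      (2 * v / N + 2 * c * (2 - N) * v ^ (2 - N) / v) v := by
  have hpoly : HasDerivAt (fun x : ℝ => (x ^ 2 - 1) / N) (2 * v / N) v := by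
    simpa using ((hasDerivAt_pow 2 v).sub_const 1).div_const N
  have hrpow := (hasDerivAt_rpow_const (p := 2 - N) (Or.inl hv)).const_mul (2 * c)
  refine (hpoly.add hrpow).congr_deriv ?_
  rw [rpow_sub_one hv]
  ring

theorem sqrt_sq_sub_one_div_add (N c v q : ℝ) (hN : 0 < N) :
    √((v ^ 2 - 1) / N + 2 * c * q) = √(v ^ 2 + (2 * c * N * q - 1)) / √N := by
  rw [← sqrt_div' _ hN.le]
  congr 1
  field_simp
  ring

theorem tendsto_sqrt_sq_add_div_self {e : ℝ → ℝ} {a : ℝ} (he : Tendsto e atTop (𝓝 a)) :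
    Tendsto (fun v => √(v ^ 2 + e v) / v) atTop (𝓝 1) := by
  have hinv : Tendsto (fun v : ℝ => (v ^ 2)⁻¹) atTop (𝓝 0) :=
    (tendsto_pow_atTop two_ne_zero).inv_tendsto_atTop
  have hlim : Tendsto (fun v => √(1 + e v * (v ^ 2)⁻¹)) atTop (𝓝 1) := by
    simpa using ((he.mul hinv).const_add 1).sqrt
  refine hlim.congr' ?_
  filter_upwards [eventually_gt_atTop 0] with v hv
  rw [← sqrt_sq hv.le, ← sqrt_div' _ (sq_nonneg v), sqrt_sq hv.le]
  congr 1
  field_simp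

theorem sub_sqrt_mul_sq_eq {N c v q T s : ℝ} (hs0 : 0 < s) (hs : s ^ 2 = N) (hv : 0 < v)
    (hT : 0 < T) (hT2 : T ^ 2 = v ^ 2 + (2 * c * N * q - 1)) :
    (s - ((2 * v / N + 2 * c * (2 - N) * q / v) / (2 * (T / s)) + (N - 1) * (T / s) / v)) * v ^ 2
      = v / T * (N * (v / (T + v)) * (2 * c * N * q - 1) + (N - 1) - c * N ^ 2 * q) / s := by
  subst hs
  have : T + v ≠ 0 := by positivity
  field_simp
  linear_combination (T + v - s ^ 2 * T) * hT2

theorem stmt_13_general (N c : ℝ) (hN : 2 < N)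
    (F : ℝ → ℝ) (hF : ∀ v, F v = (v ^ 2 - 1) / N + 2 * c * v ^ (2 - N))
    (G : ℝ → ℝ)
    (hG : ∀ v, G v = deriv F v / (2 * Real.sqrt (F v)) + (N - 1) * Real.sqrt (F v) / v) :
    Filter.Tendsto (fun v => (Real.sqrt N - G v) * v ^ 2) Filter.atTop
      (𝓝 ((N - 2) / (2 * Real.sqrt N))) := by
  have hN0 : 0 < N := by linarith
  obtain rfl : F = fun x => (x ^ 2 - 1) / N + 2 * c * x ^ (2 - N) := funext hF
  set q : ℝ → ℝ := fun v => v ^ (2 - N)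
  set e : ℝ → ℝ := fun v => 2 * c * N * q v - 1
  set T : ℝ → ℝ := fun v => √(v ^ 2 + e v)
  have hq : Tendsto q atTop (𝓝 0) := by
    simpa [q, neg_sub] using tendsto_rpow_neg_atTop (by linarith : 0 < N - 2)
  have he : Tendsto e atTop (𝓝 (2 * c * N * 0 - 1)) := (hq.const_mul _).sub_const 1
  have hTv : Tendsto (fun v => T v / v) atTop (𝓝 1) := tendsto_sqrt_sq_add_div_self he
  have hvT : Tendsto (fun v => v / T v) atTop (𝓝 1) := by simpa using hTv.inv₀ one_ne_zero
  have hmid : Tendsto (fun v => v / (T v + v)) atTop (𝓝 (1 + 1)⁻¹) := by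
    refine ((hTv.add_const 1).inv₀ (by norm_num)).congr' ?_
    filter_upwards [eventually_gt_atTop 0] with v hv
    field_simp
  have hlim := (hvT.mul ((((hmid.const_mul N).mul he).add_const (N - 1)).sub
    (hq.const_mul (c * N ^ 2)))).div_const √N
  rw [show (N - 2) / (2 * √N) = 1 * (N * (1 + 1)⁻¹ * (2 * c * N * 0 - 1) + (N - 1)
    - c * N ^ 2 * 0) / √N by ring]
  refine hlim.congr' ?_
  have he_gt : ∀ᶠ v in atTop, -2 < e v := he.eventually (eventually_gt_nhds (by norm_num))
  filter_upwards [eventually_ge_atTop 2, he_gt] with v hv hev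
  have hpos : 0 < v ^ 2 + e v := by nlinarith
  rw [hG, (hasDerivAt_sq_sub_one_div_add_rpow N c (by positivity : v ≠ 0)).deriv,
    sqrt_sq_sub_one_div_add N c v _ hN0]
  exact (sub_sqrt_mul_sq_eq (sqrt_pos.2 hN0) (sq_sqrt hN0.le) (by positivity) (sqrt_pos.2 hpos)
    (sq_sqrt hpos.le)).symm

theorem stmt_13 (N c : ℝ) (hN : 2 < N) (hc : 0 < c)
    (F : ℝ → ℝ) (hF : ∀ v, F v = (v ^ 2 - 1) / N + 2 * c * v ^ (2 - N))
    (G : ℝ → ℝ)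
    (hG : ∀ v, G v = deriv F v / (2 * Real.sqrt (F v)) + (N - 1) * Real.sqrt (F v) / v) :
    Filter.Tendsto (fun v => (Real.sqrt N - G v) * v ^ 2) Filter.atTop
      (𝓝 ((N - 2) / (2 * Real.sqrt N))) :=
  stmt_13_general N c hN F hF G hG
end

section
/- Let N > 2 be a real number, set c* = (N−2)^{(N−2)/2} / N^{(N+2)/2} and a = √((N−2)/N), and define F(v) = (v²−1)/N + 2c*·v^{2−N} for v > 0. Then there exists a unique differentiable function v : ℝ → ℝ such that v(t) > a for all t, v(0) = 1, and v′(t) = √(F(v(t))) for all t ∈ ℝ. Moreover, v is strictly increasing, v(t) → a as t → −∞, and v(t) → ∞ as t → ∞. -/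
/-!
The constant `c*` is exactly the one for which `a` is a double zero of `F`. Since `F'' > 0` on
`(0, ∞)`, `F` is then positive on `(a, ∞)`, and since `F''` is decreasing,
`F v ≤ F''(a) / 2 * (v - a) ^ 2`, i.e. `√F v ≤ L (v - a)`. Hence the travel time
`T w = ∫₁ʷ dv / √F v` diverges logarithmically at both ends of `(a, ∞)`, so `T` is an increasing
bijection `(a, ∞) → ℝ` whose inverse solves the equation. Conversely every solution satisfies
`T (v t) = t`, which gives uniqueness, monotonicity and the limits.
-/

open Real Filter Set Topology

theorem pos_of_hasDerivAt_pos {g g' : ℝ → ℝ} {a x : ℝ} (hg : ∀ y ≥ a, HasDerivAt g (g' y) y)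
    (hg' : ∀ y > a, 0 < g' y) (ha : g a = 0) (hx : a < x) : 0 < g x := by
  have hmono : StrictMonoOn g (Ici a) :=
    strictMonoOn_of_hasDerivWithinAt_pos (convex_Ici a)
      (fun y hy => (hg y hy).continuousAt.continuousWithinAt)
      (fun y hy => by rw [interior_Ici] at hy ⊢; exact (hg y (le_of_lt hy)).hasDerivWithinAt)
      (fun y hy => by rw [interior_Ici] at hy; exact hg' y hy)
  simpa [ha] using hmono self_mem_Ici hx.le hx

theorem nonneg_of_hasDerivAt_nonneg {g g' : ℝ → ℝ} {a x : ℝ} (hg : ∀ y ≥ a, HasDerivAt g (g' y) y)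
    (hg' : ∀ y > a, 0 ≤ g' y) (ha : g a = 0) (hx : a ≤ x) : 0 ≤ g x := by
  have hmono : MonotoneOn g (Ici a) :=
    monotoneOn_of_hasDerivWithinAt_nonneg (convex_Ici a)
      (fun y hy => (hg y hy).continuousAt.continuousWithinAt)
      (fun y hy => by rw [interior_Ici] at hy ⊢; exact (hg y (le_of_lt hy)).hasDerivWithinAt)
      (fun y hy => by rw [interior_Ici] at hy; exact hg' y hy)
  simpa [ha] using hmono self_mem_Ici hx hx

section SecondDerivative

variable {f f' f'' : ℝ → ℝ} {a : ℝ}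

theorem pos_of_second_deriv_pos (hf : ∀ x ≥ a, HasDerivAt f (f' x) x)
    (hf' : ∀ x ≥ a, HasDerivAt f' (f'' x) x) (h₀ : f a = 0) (h₀' : f' a = 0)
    (hf'' : ∀ x > a, 0 < f'' x) {x : ℝ} (hx : a < x) : 0 < f x :=
  pos_of_hasDerivAt_pos hf (fun _ hy => pos_of_hasDerivAt_pos hf' hf'' h₀' hy) h₀ hx

theorem le_half_mul_sq_of_second_deriv_le {K : ℝ} (hf : ∀ x ≥ a, HasDerivAt f (f' x) x)
    (hf' : ∀ x ≥ a, HasDerivAt f' (f'' x) x) (h₀ : f a = 0) (h₀' : f' a = 0)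
    (hf'' : ∀ x > a, f'' x ≤ K) {x : ℝ} (hx : a ≤ x) : f x ≤ K / 2 * (x - a) ^ 2 := by
  have hslope : ∀ y > a, 0 ≤ K * (y - a) - f' y := by
    refine fun y hy => nonneg_of_hasDerivAt_nonneg (g := fun z => K * (z - a) - f' z)
      (fun z hz => ?_) (fun z hz => sub_nonneg.2 (hf'' z hz)) (by simp [h₀']) hy.le
    exact (((hasDerivAt_id' z).sub_const a).const_mul K).sub (hf' z hz) |>.congr_deriv (by ring)
  have hgap : ∀ z ≥ a, HasDerivAt (fun z => K / 2 * (z - a) ^ 2 - f z) (K * (z - a) - f' z) z := by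
    intro z hz
    exact (((hasDerivAt_id' z).sub_const a).pow 2 |>.const_mul (K / 2)).sub (hf z hz)
      |>.congr_deriv (by ring)
  simpa using nonneg_of_hasDerivAt_nonneg hgap hslope (by simp [h₀]) hx

end SecondDerivative

noncomputable def quasiEinsteinPotential (N cs v : ℝ) : ℝ := (v ^ 2 - 1) / N + 2 * cs * v ^ (2 - N)

section QuasiEinsteinPotential

variable {N cs v : ℝ}

theorem hasDerivAt_quasiEinsteinPotential (hv : v ≠ 0) :
    HasDerivAt (quasiEinsteinPotential N cs) (2 * v / N + 2 * cs * (2 - N) * v ^ (1 - N)) v := by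
  have h := (((hasDerivAt_pow 2 v).sub_const 1).div_const N).add
    ((hasDerivAt_rpow_const (p := 2 - N) (Or.inl hv)).const_mul (2 * cs))
  refine h.congr_deriv ?_
  rw [show 2 - N - 1 = 1 - N by ring]
  push_cast
  ring

theorem hasDerivAt_deriv_quasiEinsteinPotential (hv : v ≠ 0) :
    HasDerivAt (fun v => 2 * v / N + 2 * cs * (2 - N) * v ^ (1 - N))
      (2 / N + 2 * cs * (2 - N) * (1 - N) * v ^ (-N)) v := by
  have h := (((hasDerivAt_id' v).const_mul 2).div_const N).add
    ((hasDerivAt_rpow_const (p := 1 - N) (Or.inl hv)).const_mul (2 * cs * (2 - N)))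
  refine h.congr_deriv ?_
  rw [show 1 - N - 1 = -N by ring]
  ring

theorem sq_mul_criticalConstant_mul_rpow (hN : 2 < N) :
    N ^ 2 * ((N - 2) ^ ((N - 2) / 2) / N ^ ((N + 2) / 2)) * √((N - 2) / N) ^ (2 - N) = 1 := by
  have hN0 : 0 < N := by linarith
  have hN2 : 0 < N - 2 := by linarith
  rw [sqrt_eq_rpow, ← rpow_mul (div_pos hN2 hN0).le, div_rpow hN2.le hN0.le,
    show 1 / 2 * (2 - N) = (2 - N) / 2 by ring]
  have h1 : (N - 2) ^ ((N - 2) / 2) * (N - 2) ^ ((2 - N) / 2) = 1 := by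
    rw [← rpow_add hN2, ← add_div, show N - 2 + (2 - N) = 0 by ring, zero_div, rpow_zero]
  have h2 : N ^ ((N + 2) / 2) * N ^ ((2 - N) / 2) = N ^ 2 := by
    rw [← rpow_add hN0, ← rpow_natCast]; ring_nf
  field_simp
  linear_combination N ^ 2 * h1 - h2

variable {a : ℝ}

theorem quasiEinsteinPotential_eq_zero (hN : N ≠ 0) (ha : N * a ^ 2 = N - 2)
    (hcs : N ^ 2 * cs * a ^ (2 - N) = 1) : quasiEinsteinPotential N cs a = 0 := by
  have h : quasiEinsteinPotential N cs a =
      (N * a ^ 2 - N + 2 * (N ^ 2 * cs * a ^ (2 - N))) / N ^ 2 := by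
    unfold quasiEinsteinPotential; field_simp
  rw [h, ha, hcs]; ring

theorem deriv_quasiEinsteinPotential_eq_zero (hN : N ≠ 0) (ha₀ : 0 < a) (ha : N * a ^ 2 = N - 2)
    (hcs : N ^ 2 * cs * a ^ (2 - N) = 1) : 2 * a / N + 2 * cs * (2 - N) * a ^ (1 - N) = 0 := by
  have hpow : a ^ (2 - N) = a * a ^ (1 - N) := by
    rw [show 2 - N = 1 + (1 - N) by ring, rpow_add ha₀, rpow_one]
  have h : 2 * a / N + 2 * cs * (2 - N) * a ^ (1 - N) =
      (2 * (N * a ^ 2) + 2 * (2 - N) * (N ^ 2 * cs * a ^ (2 - N))) / (N ^ 2 * a) := by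
    rw [hpow]; field_simp
  rw [h, ha, hcs]; ring

theorem quasiEinsteinPotential_pos_and_le_sq (hN : 2 < N) (hcs : 0 ≤ cs) (ha₀ : 0 < a)
    (h₀ : quasiEinsteinPotential N cs a = 0)
    (h₀' : 2 * a / N + 2 * cs * (2 - N) * a ^ (1 - N) = 0) (hv : a < v) :
    0 < quasiEinsteinPotential N cs v ∧ quasiEinsteinPotential N cs v ≤
      (2 / N + 2 * cs * (2 - N) * (1 - N) * a ^ (-N)) / 2 * (v - a) ^ 2 := by
  have hf : ∀ x ≥ a, HasDerivAt (quasiEinsteinPotential N cs)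
      (2 * x / N + 2 * cs * (2 - N) * x ^ (1 - N)) x :=
    fun x hx => hasDerivAt_quasiEinsteinPotential (ha₀.trans_le hx).ne'
  have hf' : ∀ x ≥ a, HasDerivAt (fun v => 2 * v / N + 2 * cs * (2 - N) * v ^ (1 - N))
      (2 / N + 2 * cs * (2 - N) * (1 - N) * x ^ (-N)) x :=
    fun x hx => hasDerivAt_deriv_quasiEinsteinPotential (ha₀.trans_le hx).ne'
  have hcoeff : 0 ≤ 2 * cs * (2 - N) * (1 - N) := by
    have := mul_pos (sub_pos.2 hN) (by linarith : (0:ℝ) < N - 1)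
    nlinarith
  refine ⟨pos_of_second_deriv_pos hf hf' h₀ h₀' (fun x hx => ?_) hv,
    le_half_mul_sq_of_second_deriv_le hf hf' h₀ h₀' (fun x hx => ?_) hv.le⟩
  · have : (0:ℝ) < 2 / N := by positivity
    have := mul_nonneg hcoeff (rpow_pos_of_pos (ha₀.trans hx) (-N)).le
    linarith
  · have := rpow_le_rpow_of_nonpos ha₀ hx.le (by linarith : -N ≤ 0)
    have := mul_le_mul_of_nonneg_left this hcoeff
    linarith

end QuasiEinsteinPotential

noncomputable def travelTime (f : ℝ → ℝ) (x₀ w : ℝ) : ℝ := ∫ x in x₀..w, (f x)⁻¹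

section TravelTime

variable {f : ℝ → ℝ} {a L x₀ : ℝ}

theorem hasDerivAt_travelTime (hf : ContinuousOn f (Ioi a)) (hpos : ∀ x > a, 0 < f x)
    (hx₀ : a < x₀) {w : ℝ} (hw : a < w) : HasDerivAt (travelTime f x₀) (f w)⁻¹ w := by
  have hinv : ContinuousOn (fun x => (f x)⁻¹) (Ioi a) :=
    hf.inv₀ fun x hx => (hpos x hx).ne'
  have hsub : uIcc x₀ w ⊆ Ioi a := fun x hx => (lt_min hx₀ hw).trans_le hx.1
  exact intervalIntegral.integral_hasDerivAt_right ((hinv.mono hsub).intervalIntegrable)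
    (hinv.stronglyMeasurableAtFilter isOpen_Ioi w hw)
    (hinv.continuousAt (isOpen_Ioi.mem_nhds hw))

theorem strictMonoOn_travelTime (hf : ContinuousOn f (Ioi a)) (hpos : ∀ x > a, 0 < f x)
    (hx₀ : a < x₀) : StrictMonoOn (travelTime f x₀) (Ioi a) :=
  strictMonoOn_of_hasDerivWithinAt_pos (convex_Ioi a)
    (fun w hw => (hasDerivAt_travelTime hf hpos hx₀ hw).continuousAt.continuousWithinAt)
    (fun w hw => by
      rw [interior_Ioi] at hw ⊢; exact (hasDerivAt_travelTime hf hpos hx₀ hw).hasDerivWithinAt)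
    (fun w hw => by rw [interior_Ioi] at hw; exact inv_pos.2 (hpos w hw))

theorem monotoneOn_travelTime_sub_log (hf : ContinuousOn f (Ioi a)) (hpos : ∀ x > a, 0 < f x)
    (hle : ∀ x > a, f x ≤ L * (x - a)) (hx₀ : a < x₀) :
    MonotoneOn (fun w => travelTime f x₀ w - L⁻¹ * log (w - a)) (Ioi a) := by
  have hderiv : ∀ w > a, HasDerivAt (fun w => travelTime f x₀ w - L⁻¹ * log (w - a))
      ((f w)⁻¹ - (L * (w - a))⁻¹) w := by
    intro w hw
    refine (hasDerivAt_travelTime hf hpos hx₀ hw).sub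
      ((((hasDerivAt_id' w).sub_const a).log (sub_pos.2 hw).ne').const_mul L⁻¹) |>.congr_deriv ?_
    rw [mul_inv]; ring
  refine monotoneOn_of_hasDerivWithinAt_nonneg (convex_Ioi a)
    (fun w hw => (hderiv w hw).continuousAt.continuousWithinAt)
    (fun w hw => by rw [interior_Ioi] at hw ⊢; exact (hderiv w hw).hasDerivWithinAt)
    (fun w hw => ?_)
  rw [interior_Ioi] at hw
  exact sub_nonneg.2 (inv_anti₀ (hpos w hw) (hle w hw))

theorem tendsto_travelTime_atTop (hf : ContinuousOn f (Ioi a)) (hpos : ∀ x > a, 0 < f x)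
    (hle : ∀ x > a, f x ≤ L * (x - a)) (hx₀ : a < x₀) :
    Tendsto (travelTime f x₀) atTop atTop := by
  have hL : 0 < L := pos_of_mul_pos_left ((hpos x₀ hx₀).trans_le (hle x₀ hx₀)) (sub_pos.2 hx₀).le
  set c := travelTime f x₀ x₀ - L⁻¹ * log (x₀ - a)
  have hlog : Tendsto (fun w => c + L⁻¹ * log (w - a)) atTop atTop :=
    tendsto_atTop_add_const_left _ c <|
      (tendsto_log_atTop.comp (tendsto_atTop_add_const_right _ (-a) tendsto_id)).const_mul_atTop
        (inv_pos.2 hL)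
  refine tendsto_atTop_mono' _ ?_ hlog
  filter_upwards [eventually_ge_atTop x₀] with w hw
  have := monotoneOn_travelTime_sub_log hf hpos hle hx₀ hx₀ (hx₀.trans_le hw) hw
  simp only at this
  linarith

theorem tendsto_travelTime_nhdsGT (hf : ContinuousOn f (Ioi a)) (hpos : ∀ x > a, 0 < f x)
    (hle : ∀ x > a, f x ≤ L * (x - a)) (hx₀ : a < x₀) :
    Tendsto (travelTime f x₀) (𝓝[>] a) atBot := by
  have hL : 0 < L := pos_of_mul_pos_left ((hpos x₀ hx₀).trans_le (hle x₀ hx₀)) (sub_pos.2 hx₀).le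
  set c := travelTime f x₀ x₀ - L⁻¹ * log (x₀ - a)
  have hshift : Tendsto (fun w => w - a) (𝓝[>] a) (𝓝[>] 0) := by
    have h := (map_add_right_nhdsGT (c := -a) (a := a)).le
    rwa [add_neg_cancel] at h
  have hlog : Tendsto (fun w => c + L⁻¹ * log (w - a)) (𝓝[>] a) atBot :=
    tendsto_atBot_add_const_left _ c <|
      (tendsto_log_nhdsGT_zero.comp hshift).const_mul_atBot (inv_pos.2 hL)
  refine tendsto_atBot_mono' _ ?_ hlog
  filter_upwards [Ioo_mem_nhdsGT hx₀] with w hw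
  have := monotoneOn_travelTime_sub_log hf hpos hle hx₀ hw.1 hx₀ hw.2.le
  simp only at this
  linarith

theorem exists_travelTime_eq (hf : ContinuousOn f (Ioi a)) (hpos : ∀ x > a, 0 < f x)
    (hle : ∀ x > a, f x ≤ L * (x - a)) (hx₀ : a < x₀) (t : ℝ) :
    ∃ w > a, travelTime f x₀ w = t := by
  obtain ⟨w₁, hw₁t, hw₁a⟩ :=
    (((tendsto_travelTime_nhdsGT hf hpos hle hx₀).eventually_lt_atBot t).and
      self_mem_nhdsWithin).exists
  obtain ⟨w₂, hw₂t, hw₂a⟩ :=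
    (((tendsto_travelTime_atTop hf hpos hle hx₀).eventually_gt_atTop t).and
      (eventually_gt_atTop a)).exists
  have hsub : uIcc w₁ w₂ ⊆ Ioi a := fun x hx => (lt_min hw₁a hw₂a).trans_le hx.1
  obtain ⟨w, hw, hwt⟩ := intermediate_value_uIcc
    (fun x hx => (hasDerivAt_travelTime hf hpos hx₀ (hsub hx)).continuousAt.continuousWithinAt)
    ⟨min_le_of_left_le hw₁t.le, le_max_of_le_right hw₂t.le⟩
  exact ⟨w, hsub hw, hwt⟩

section Solution

variable {v : ℝ → ℝ}

theorem travelTime_solution_eq (hf : ContinuousOn f (Ioi a)) (hpos : ∀ x > a, 0 < f x)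
    (hx₀ : a < x₀) (hva : ∀ t, a < v t) (hv₀ : v 0 = x₀) (hv : ∀ t, HasDerivAt v (f (v t)) t)
    (t : ℝ) : travelTime f x₀ (v t) = t := by
  have hd : ∀ t, HasDerivAt (fun t => travelTime f x₀ (v t) - t) 0 t := fun t =>
    ((hasDerivAt_travelTime hf hpos hx₀ (hva t)).comp t (hv t)).sub (hasDerivAt_id' t)
      |>.congr_deriv (by rw [inv_mul_cancel₀ (hpos _ (hva t)).ne', sub_self])
  have := is_const_of_deriv_eq_zero (fun t => (hd t).differentiableAt) (fun t => (hd t).deriv) t 0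
  simpa [hv₀, travelTime, sub_eq_zero] using this

theorem solution_travelTime_eq (hf : ContinuousOn f (Ioi a)) (hpos : ∀ x > a, 0 < f x)
    (hx₀ : a < x₀) (hva : ∀ t, a < v t) (hv₀ : v 0 = x₀) (hv : ∀ t, HasDerivAt v (f (v t)) t)
    {w : ℝ} (hw : a < w) : v (travelTime f x₀ w) = w :=
  (strictMonoOn_travelTime hf hpos hx₀).injOn (hva _) hw
    (travelTime_solution_eq hf hpos hx₀ hva hv₀ hv _)

theorem solution_strictMono_and_tendsto (hf : ContinuousOn f (Ioi a)) (hpos : ∀ x > a, 0 < f x)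
    (hx₀ : a < x₀) (hva : ∀ t, a < v t) (hv₀ : v 0 = x₀) (hv : ∀ t, HasDerivAt v (f (v t)) t) :
    StrictMono v ∧ Tendsto v atBot (𝓝 a) ∧ Tendsto v atTop atTop := by
  have hmono : StrictMono v := strictMono_of_hasDerivAt_pos hv fun t => hpos _ (hva t)
  have hsurj : ∀ w > a, v (travelTime f x₀ w) = w := fun w hw =>
    solution_travelTime_eq hf hpos hx₀ hva hv₀ hv hw
  refine ⟨hmono, tendsto_atBot_isGLB hmono.monotone ⟨?_, fun b hb => ?_⟩,
    tendsto_atTop_atTop_of_monotone hmono.monotone fun b => ?_⟩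
  · rintro _ ⟨t, rfl⟩
    exact (hva t).le
  · by_contra! hab
    obtain ⟨w, haw, hwb⟩ := exists_between hab
    exact (hb ⟨_, hsurj w haw⟩).not_gt hwb
  · exact ⟨_, (le_max_left b x₀).trans (hsurj _ (hx₀.trans_le (le_max_right b x₀))).ge⟩

theorem existsUnique_solution (hf : ContinuousOn f (Ioi a)) (hpos : ∀ x > a, 0 < f x)
    (hle : ∀ x > a, f x ≤ L * (x - a)) (hx₀ : a < x₀) :
    ∃! v : ℝ → ℝ, (∀ t, a < v t) ∧ v 0 = x₀ ∧ ∀ t, HasDerivAt v (f (v t)) t := by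
  have hT := strictMonoOn_travelTime hf hpos hx₀
  choose ψ hψa hψ using exists_travelTime_eq hf hpos hle hx₀
  have hψT : ∀ w > a, ψ (travelTime f x₀ w) = w := fun w hw => hT.injOn (hψa _) hw (hψ _)
  have hmono : StrictMono ψ := fun s t hst => (hT.lt_iff_lt (hψa s) (hψa t)).1 (by rwa [hψ, hψ])
  have hcont : Continuous ψ := continuous_iff_continuousAt.2 fun t =>
    (hmono.strictMonoOn univ).continuousAt_of_image_mem_nhds univ_mem <|
      mem_of_superset (isOpen_Ioi.mem_nhds (hψa t)) fun w hw => ⟨_, mem_univ _, hψT w hw⟩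
  refine ⟨ψ, ⟨hψa, ?_, fun t => ?_⟩, fun v ⟨hva, hv₀, hv⟩ => funext fun t => ?_⟩
  · simpa [travelTime] using hψT x₀ hx₀
  · simpa using HasDerivAt.of_local_left_inverse hcont.continuousAt
      (hasDerivAt_travelTime hf hpos hx₀ (hψa t)) (inv_pos.2 (hpos _ (hψa t))).ne'
      (Eventually.of_forall hψ)
  · exact hT.injOn (hva t) (hψa t) <| by rw [hψ, travelTime_solution_eq hf hpos hx₀ hva hv₀ hv]

end Solution

end TravelTime

theorem stmt_14 (N : ℝ) (hN : 2 < N)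
    (cs a : ℝ) (hcs : cs = (N - 2) ^ ((N - 2) / 2) / N ^ ((N + 2) / 2))
    (ha : a = Real.sqrt ((N - 2) / N))
    (F : ℝ → ℝ) (hF : ∀ v, F v = (v ^ 2 - 1) / N + 2 * cs * v ^ (2 - N)) :
    (∃! v : ℝ → ℝ, (∀ t, a < v t) ∧ v 0 = 1 ∧
      ∀ t, HasDerivAt v (Real.sqrt (F (v t))) t) ∧
    (∀ v : ℝ → ℝ, ((∀ t, a < v t) ∧ v 0 = 1 ∧ ∀ t, HasDerivAt v (Real.sqrt (F (v t))) t) →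
      StrictMono v ∧ Filter.Tendsto v Filter.atBot (𝓝 a) ∧
        Filter.Tendsto v Filter.atTop Filter.atTop) := by
  obtain rfl : F = quasiEinsteinPotential N cs := funext hF
  have hN₀ : 0 < N := by linarith
  have hquot : 0 < (N - 2) / N := div_pos (by linarith) hN₀
  have ha₀ : 0 < a := ha ▸ sqrt_pos.2 hquot
  have ha₁ : a < 1 := ha ▸ (sqrt_lt' one_pos).2 (by rw [one_pow, div_lt_one hN₀]; linarith)
  have haN : N * a ^ 2 = N - 2 := by rw [ha, sq_sqrt hquot.le]; field_simp
  have hcsa : N ^ 2 * cs * a ^ (2 - N) = 1 := hcs ▸ ha ▸ sq_mul_criticalConstant_mul_rpow hN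
  have hcs₀ : 0 ≤ cs := hcs ▸ by positivity
  set K := 2 / N + 2 * cs * (2 - N) * (1 - N) * a ^ (-N)
  have hFbound := fun v (hv : a < v) => quasiEinsteinPotential_pos_and_le_sq hN hcs₀ ha₀
    (quasiEinsteinPotential_eq_zero hN₀.ne' haN hcsa)
    (deriv_quasiEinsteinPotential_eq_zero hN₀.ne' ha₀ haN hcsa) hv
  have hcont : ContinuousOn (fun v => √(quasiEinsteinPotential N cs v)) (Ioi a) := fun v hv =>
    (hasDerivAt_quasiEinsteinPotential (ha₀.trans hv).ne').continuousAt.continuousWithinAt.sqrt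
  have hpos : ∀ v > a, 0 < √(quasiEinsteinPotential N cs v) := fun v hv =>
    sqrt_pos.2 (hFbound v hv).1
  have hle : ∀ v > a, √(quasiEinsteinPotential N cs v) ≤ √(K / 2) * (v - a) := fun v hv => by
    calc √(quasiEinsteinPotential N cs v) ≤ √(K / 2 * (v - a) ^ 2) := sqrt_le_sqrt (hFbound v hv).2
      _ = √(K / 2) * (v - a) := by rw [sqrt_mul' _ (sq_nonneg _), sqrt_sq (sub_nonneg.2 hv.le)]
  exact ⟨existsUnique_solution hcont hpos hle ha₁, fun v ⟨hva, hv₀, hv⟩ =>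
    solution_strictMono_and_tendsto hcont hpos ha₁ hva hv₀ hv⟩
end

section
/- Let N > 2 be a real number, set c* = (N−2)^{(N−2)/2} / N^{(N+2)/2} and a = √((N−2)/N), define F(v) = (v²−1)/N + 2c*·v^{2−N} for v > 0, and let v : ℝ → ℝ be the unique differentiable function with v(t) > a for all t, v(0) = 1, and v′(t) = √(F(v(t))) for all t. Then there exists a constant c₀ > 0 such that v(t)·e^{−t/√N} → c₀ as t → ∞. -/
open Real Filter Set Topology MeasureTheory

theorem stmt_15 (N : ℝ) (hN : 2 < N)
    (cs a : ℝ) (hcs : cs = (N - 2) ^ ((N - 2) / 2) / N ^ ((N + 2) / 2))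
    (ha : a = Real.sqrt ((N - 2) / N))
    (F : ℝ → ℝ) (hF : ∀ v, F v = (v ^ 2 - 1) / N + 2 * cs * v ^ (2 - N))
    (v : ℝ → ℝ) (hva : ∀ t, a < v t) (hv0 : v 0 = 1)
    (hvd : ∀ t, HasDerivAt v (Real.sqrt (F (v t))) t) :
    ∃ c₀ : ℝ, 0 < c₀ ∧
      Filter.Tendsto (fun t => v t * Real.exp (-t / Real.sqrt N)) Filter.atTop (𝓝 c₀) := by
  have hN0 : (0:ℝ) < N := by linarith
  have hN2 : (0:ℝ) < N - 2 := by linarith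
  have hsN : 0 < Real.sqrt N := Real.sqrt_pos.mpr hN0
  have hsN2 : Real.sqrt N ^ 2 = N := Real.sq_sqrt hN0.le
  have hcs0 : 0 < cs := by
    rw [hcs]
    positivity
  have ha0 : 0 ≤ a := ha ▸ Real.sqrt_nonneg _
  have hvpos : ∀ t, 0 < v t := fun t => lt_of_le_of_lt ha0 (hva t)
  have hdiff : Differentiable ℝ v := fun t => (hvd t).differentiableAt
  have hmono : Monotone v := by
    apply monotone_of_deriv_nonneg hdiff
    intro t
    rw [(hvd t).deriv]
    exact Real.sqrt_nonneg _
  have hv1 : ∀ t : ℝ, 0 ≤ t → 1 ≤ v t := fun t ht => hv0 ▸ hmono ht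
  have hexp : 2 - N ≤ 0 := by linarith
  have hFpos : ∀ x : ℝ, 1 ≤ x → 0 < F x := by
    intro x hx
    rw [hF]
    have h1 : 0 < x ^ (2 - N) := Real.rpow_pos_of_pos (by linarith) _
    have h2 : 0 ≤ (x ^ 2 - 1) / N := by
      apply div_nonneg _ hN0.le; nlinarith
    nlinarith
  have hFle : ∀ x : ℝ, 1 ≤ x → |F x - x ^ 2 / N| ≤ 1 / N + 2 * cs := by
    intro x hx
    have h1 : 0 < x ^ (2 - N) := Real.rpow_pos_of_pos (by linarith) _
    have h2 : x ^ (2 - N) ≤ 1 := Real.rpow_le_one_of_one_le_of_nonpos hx hexp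
    have hNi : 0 < 1 / N := by positivity
    have key : F x - x ^ 2 / N = 2 * cs * x ^ (2 - N) - 1 / N := by
      rw [hF]; ring
    rw [key, abs_le]
    constructor <;> nlinarith
  set C : ℝ := (1 / N + 2 * cs) * Real.sqrt N with hC
  have hC0 : 0 < C := by positivity
  have hmain : ∀ x : ℝ, 1 ≤ x → |Real.sqrt (F x) - x / Real.sqrt N| ≤ C / x := by
    intro x hx
    set A := Real.sqrt (F x) with hA'
    set B := x / Real.sqrt N with hB'
    have hB : 0 < B := div_pos (by linarith) hsN
    have hA : 0 ≤ A := Real.sqrt_nonneg _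
    have hA2 : A ^ 2 = F x := Real.sq_sqrt (hFpos x hx).le
    have hB2 : B ^ 2 = x ^ 2 / N := by rw [hB', div_pow, hsN2]
    have hfac : |A - B| * (A + B) = |A ^ 2 - B ^ 2| := by
      rw [← abs_of_pos (show 0 < A + B by linarith), ← abs_mul]
      congr 1; ring
    have h1 : |A ^ 2 - B ^ 2| ≤ 1 / N + 2 * cs := by rw [hA2, hB2]; exact hFle x hx
    have h2 : |A - B| ≤ (1 / N + 2 * cs) / B := by
      rw [le_div_iff₀ hB]
      calc |A - B| * B ≤ |A - B| * (A + B) := by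
            apply mul_le_mul_of_nonneg_left _ (abs_nonneg _); linarith
        _ = |A ^ 2 - B ^ 2| := hfac
        _ ≤ _ := h1
    calc |A - B| ≤ (1 / N + 2 * cs) / B := h2
      _ = C / x := by rw [hB', div_div_eq_mul_div]
  -- lower bound on F
  have h22 : (0:ℝ) < (2:ℝ) ^ (2 - N) := Real.rpow_pos_of_pos two_pos _
  set δ : ℝ := min (3 / N) (2 * cs * 2 ^ (2 - N)) with hδ
  have hδ0 : 0 < δ := lt_min (by positivity) (by positivity)
  have hδF : ∀ x : ℝ, 1 ≤ x → δ ≤ F x := by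
    intro x hx
    rw [hF]
    have h1 : 0 < x ^ (2 - N) := Real.rpow_pos_of_pos (by linarith) _
    rcases le_or_gt 2 x with h | h
    · calc δ ≤ 3 / N := min_le_left _ _
        _ ≤ (x ^ 2 - 1) / N := by gcongr; nlinarith
        _ ≤ (x ^ 2 - 1) / N + 2 * cs * x ^ (2 - N) := by nlinarith
    · have h2 : (2:ℝ) ^ (2 - N) ≤ x ^ (2 - N) :=
        Real.rpow_le_rpow_of_nonpos (by linarith) h.le hexp
      have h3 : 0 ≤ (x ^ 2 - 1) / N := div_nonneg (by nlinarith) hN0.le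
      calc δ ≤ 2 * cs * 2 ^ (2 - N) := min_le_right _ _
        _ ≤ (x ^ 2 - 1) / N + 2 * cs * x ^ (2 - N) := by nlinarith
  set δ' : ℝ := Real.sqrt δ with hδ'
  have hδ'0 : 0 < δ' := Real.sqrt_pos.mpr hδ0
  -- linear growth
  have hgrow : ∀ t : ℝ, 0 ≤ t → 1 + δ' * t ≤ v t := by
    intro t ht
    have hdg : ∀ x : ℝ, HasDerivAt (fun t => v t - δ' * t) (Real.sqrt (F (v x)) - δ') x := by
      intro x
      have h2 : HasDerivAt (fun t : ℝ => δ' * t) δ' x := by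
        simpa using (hasDerivAt_id x).const_mul δ'
      exact (hvd x).sub h2
    have hg : MonotoneOn (fun t => v t - δ' * t) (Ici (0:ℝ)) := by
      apply monotoneOn_of_deriv_nonneg (convex_Ici 0)
      · exact (hdiff.continuous.sub (continuous_const.mul continuous_id)).continuousOn
      · intro x _
        exact (hdg x).differentiableAt.differentiableWithinAt
      · intro x hx
        rw [interior_Ici] at hx
        rw [(hdg x).deriv]
        have hxx : δ' ≤ Real.sqrt (F (v x)) := by
          rw [hδ']
          exact Real.sqrt_le_sqrt (hδF (v x) (hv1 x (le_of_lt hx)))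
        linarith
    have := hg self_mem_Ici (mem_Ici.mpr ht) ht
    simp only [hv0, mul_zero, sub_zero] at this
    linarith
  -- the derivative of log v t - t/√N
  set φ : ℝ → ℝ := fun t => Real.sqrt (F (v t)) / v t - (Real.sqrt N)⁻¹ with hφ
  have hφd : ∀ t : ℝ,
      HasDerivAt (fun t => Real.log (v t) - t * (Real.sqrt N)⁻¹) (φ t) t := by
    intro t
    have h1 : HasDerivAt (fun t => Real.log (v t)) (Real.sqrt (F (v t)) / v t) t :=
      (hvd t).log (hvpos t).ne'
    have h2 : HasDerivAt (fun t : ℝ => t * (Real.sqrt N)⁻¹) ((Real.sqrt N)⁻¹) t := by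
      simpa using (hasDerivAt_id t).mul_const (Real.sqrt N)⁻¹
    exact h1.sub h2
  have hFc : Continuous fun t => F (v t) := by
    have hre : (fun t => F (v t)) =
        fun t => ((v t) ^ 2 - 1) / N + 2 * cs * (v t) ^ (2 - N) := by
      funext t; rw [hF]
    rw [hre]
    have h1 : Continuous fun t => (v t) ^ (2 - N) :=
      hdiff.continuous.rpow_const fun t => Or.inl (hvpos t).ne'
    exact ((((hdiff.continuous.pow 2).sub continuous_const).div_const N).add
      (continuous_const.mul h1))
  have hφc : Continuous φ :=
    ((Real.continuous_sqrt.comp hFc).div hdiff.continuous fun t => (hvpos t).ne').sub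
      continuous_const
  have hbound : ∀ t : ℝ, 0 ≤ t → |φ t| ≤ C / (v t) ^ 2 := by
    intro t ht
    have hx := hv1 t ht
    have hx0 : 0 < v t := hvpos t
    have heq : φ t = (Real.sqrt (F (v t)) - v t / Real.sqrt N) / v t := by
      rw [hφ]
      field_simp
    rw [heq, abs_div, abs_of_pos hx0]
    have h := hmain (v t) hx
    calc |Real.sqrt (F (v t)) - v t / Real.sqrt N| / v t ≤ (C / v t) / v t := by gcongr
      _ = C / (v t) ^ 2 := by rw [div_div, ← sq]
  -- integrability
  have hK : IntegrableOn φ (Ioi (0:ℝ)) := by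
    have h01 : IntegrableOn φ (Ioc (0:ℝ) 1) := hφc.integrableOn_Ioc
    have h1i : IntegrableOn φ (Ioi (1:ℝ)) := by
      have hg : IntegrableOn (fun t : ℝ => (C / δ' ^ 2) * t ^ (-2 : ℝ)) (Ioi (1:ℝ)) :=
        (integrableOn_Ioi_rpow_of_lt (by norm_num) one_pos).const_mul _
      apply Integrable.mono' hg (hφc.aestronglyMeasurable.restrict)
      rw [ae_restrict_iff' measurableSet_Ioi]
      filter_upwards with t ht
      rw [mem_Ioi] at ht
      have ht0 : 0 < t := lt_trans one_pos ht
      have hvt : δ' * t ≤ v t := by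
        have := hgrow t ht0.le
        nlinarith
      have hdt : 0 < δ' * t := by positivity
      have h1 : |φ t| ≤ C / (v t) ^ 2 := hbound t ht0.le
      have h2 : C / (v t) ^ 2 ≤ C / (δ' * t) ^ 2 := by gcongr
      have h3 : C / (δ' * t) ^ 2 = (C / δ' ^ 2) * t ^ (-2 : ℝ) := by
        rw [Real.rpow_neg ht0.le, show ((2:ℝ)) = ((2:ℕ):ℝ) by norm_num,
          Real.rpow_natCast]
        field_simp
      rw [Real.norm_eq_abs]
      calc |φ t| ≤ C / (v t) ^ 2 := h1
        _ ≤ C / (δ' * t) ^ 2 := h2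
        _ = _ := h3
    have := h01.union h1i
    rwa [Ioc_union_Ioi_eq_Ioi (by norm_num : (0:ℝ) ≤ 1)] at this
  -- FTC and limit
  have hFTC : ∀ t : ℝ, ∫ u in (0:ℝ)..t, φ u = Real.log (v t) - t * (Real.sqrt N)⁻¹ := by
    intro t
    have := intervalIntegral.integral_eq_sub_of_hasDerivAt (f := fun t =>
      Real.log (v t) - t * (Real.sqrt N)⁻¹) (fun u _ => hφd u) (hφc.intervalIntegrable 0 t)
    rw [this]
    simp [hv0]
  set I : ℝ := ∫ u in Ioi (0:ℝ), φ u with hI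
  have hlim : Tendsto (fun t : ℝ => ∫ u in (0:ℝ)..t, φ u) atTop (𝓝 I) :=
    intervalIntegral_tendsto_integral_Ioi 0 hK tendsto_id
  have hh : Tendsto (fun t => Real.log (v t) - t * (Real.sqrt N)⁻¹) atTop (𝓝 I) :=
    hlim.congr fun t => hFTC t
  refine ⟨Real.exp I, Real.exp_pos I, ?_⟩
  have hfinal := (Real.continuous_exp.tendsto I).comp hh
  apply hfinal.congr
  intro t
  show Real.exp (Real.log (v t) - t * (Real.sqrt N)⁻¹) = v t * Real.exp (-t / Real.sqrt N)
  rw [Real.exp_sub, Real.exp_log (hvpos t), neg_div, div_eq_mul_inv, ← Real.exp_neg,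
    div_eq_mul_inv]
end

section
/- Let N > 2 be a real number, set c* = (N−2)^{(N−2)/2} / N^{(N+2)/2} and a = √((N−2)/N), define F(v) = (v²−1)/N + 2c*·v^{2−N} for v > 0, and let v : ℝ → ℝ be the unique differentiable function with v(t) > a for all t, v(0) = 1, and v′(t) = √(F(v(t))) for all t. Then v is twice differentiable, and setting H(t) = v″(t)/v′(t) + (N−1)·v′(t)/v(t), the limit lim_{t→∞} (√N − H(t))·e^{2t/√N} exists and equals some A ∈ (0,∞). -/
/-!
With `c* = a ^ N / (N (N - 2))` one has `F a = 0` and `F' > 0` on `(a, ∞)`, so `F > 0` along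
the solution, `v'' = F'(v) / 2`, and `H t = G (v t)` for an explicit function `G` of the level.
Writing `s = √(N F x) / x → 1`, the identity `x² (1 - s) = (1 - ε) / (1 + s)`, where
`ε = 2 N c* x ^ (2 - N) → 0`, gives `(√N - G x) x² → (N - 2) / (2 √N)`.
For `t ≥ 0`, `v' ≥ √(F (v 0)) > 0`, so `v → ∞`; then `log v - t / √N` is eventually antitone
while `log v - t / √N - v⁻²` is monotone, so it converges to some `l`. Hence
`v t ~ e^(l + t / √N)` and `A = (N - 2) / (2 √N) · e^(-2 l)`.
-/

open Real Filter Set Topology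

noncomputable def quasiEinsteinF (N cs x : ℝ) : ℝ := (x ^ 2 - 1) / N + 2 * cs * x ^ (2 - N)

noncomputable def quasiEinsteinF' (N cs x : ℝ) : ℝ :=
  2 * x / N + 2 * cs * ((2 - N) * x ^ (1 - N))

/-- `H t = levelMeanCurvature N cs (v t)`, using `v' = √(F v)` and `v'' = F'(v) / 2`. -/
noncomputable def levelMeanCurvature (N cs x : ℝ) : ℝ :=
  quasiEinsteinF' N cs x / (2 * √(quasiEinsteinF N cs x)) +
    (N - 1) * √(quasiEinsteinF N cs x) / x

section quasiEinsteinF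

variable {N cs a x : ℝ}

lemma hasDerivAt_quasiEinsteinF (hx : 0 < x) :
    HasDerivAt (quasiEinsteinF N cs) (quasiEinsteinF' N cs x) x := by
  have hpow := (Real.hasDerivAt_rpow_const (p := 2 - N) (Or.inl hx.ne')).const_mul (2 * cs)
  rw [show (2 : ℝ) - N - 1 = 1 - N by ring] at hpow
  refine ((((hasDerivAt_pow 2 x).sub_const 1).div_const N).add hpow).congr_deriv ?_
  unfold quasiEinsteinF'
  norm_num

lemma mul_quasiEinsteinF (hN : N ≠ 0) :
    N * quasiEinsteinF N cs x = x ^ 2 - 1 + 2 * N * cs * x ^ (2 - N) := by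
  unfold quasiEinsteinF
  field_simp

lemma critical_constant_eq (hN : 2 < N) :
    (N - 2) ^ ((N - 2) / 2) / N ^ ((N + 2) / 2) = √((N - 2) / N) ^ N / (N * (N - 2)) := by
  have hN0 : 0 < N := by linarith
  have hN2 : 0 < N - 2 := by linarith
  rw [Real.sqrt_eq_rpow, ← Real.rpow_mul (by positivity), Real.div_rpow hN2.le hN0.le,
    show (N - 2) / 2 = 1 / 2 * N - 1 by ring, show (N + 2) / 2 = 1 / 2 * N + 1 by ring,
    Real.rpow_sub hN2, Real.rpow_add hN0, Real.rpow_one, Real.rpow_one]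
  field_simp

variable (hN : 2 < N) (ha : 0 < a)
include hN ha

lemma quasiEinsteinF_critical_self (ha2 : a ^ 2 = (N - 2) / N) :
    quasiEinsteinF N (a ^ N / (N * (N - 2))) a = 0 := by
  have hN2 : N - 2 ≠ 0 := by linarith
  have hN0 : N ≠ 0 := by linarith
  rw [← mul_right_inj' hN0, mul_quasiEinsteinF hN0, mul_zero, mul_div_assoc', div_mul_eq_mul_div,
    mul_assoc, ← Real.rpow_add ha, add_sub_cancel, Real.rpow_two, ha2]
  field_simp
  ring

lemma quasiEinsteinF'_critical_pos (hx : a < x) :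
    0 < quasiEinsteinF' N (a ^ N / (N * (N - 2))) x := by
  have hx0 : 0 < x := ha.trans hx
  have hN0 : 0 < N := by linarith
  have hpow : a ^ N < x ^ N := Real.rpow_lt_rpow ha.le hx hN0
  have hxN : 0 < x ^ N := Real.rpow_pos_of_pos hx0 N
  have h : quasiEinsteinF' N (a ^ N / (N * (N - 2))) x = 2 * x / N * (1 - a ^ N / x ^ N) := by
    rw [quasiEinsteinF', Real.rpow_sub hx0, Real.rpow_one]
    have : N - 2 ≠ 0 := by linarith
    field_simp
    ring
  rw [h]
  have : a ^ N / x ^ N < 1 := (div_lt_one hxN).2 hpow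
  have : 0 < 2 * x / N := by positivity
  nlinarith

lemma strictMonoOn_quasiEinsteinF_critical :
    StrictMonoOn (quasiEinsteinF N (a ^ N / (N * (N - 2)))) (Ici a) := by
  refine strictMonoOn_of_hasDerivWithinAt_pos (f' := quasiEinsteinF' N (a ^ N / (N * (N - 2))))
    (convex_Ici a)
    (fun y hy => (hasDerivAt_quasiEinsteinF (ha.trans_le hy)).continuousAt.continuousWithinAt)
    (fun y hy => ?_) (fun y hy => ?_) <;> rw [interior_Ici] at hy
  · exact (hasDerivAt_quasiEinsteinF (ha.trans hy)).hasDerivWithinAt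
  · exact quasiEinsteinF'_critical_pos hN ha hy

lemma quasiEinsteinF_critical_pos (ha2 : a ^ 2 = (N - 2) / N) (hx : a < x) :
    0 < quasiEinsteinF N (a ^ N / (N * (N - 2))) x :=
  quasiEinsteinF_critical_self hN ha ha2 ▸
    strictMonoOn_quasiEinsteinF_critical hN ha self_mem_Ici hx.le hx

end quasiEinsteinF

section monotone

variable {f f' : ℝ → ℝ} {D : Set ℝ}

lemma monotoneOn_of_hasDerivAt_nonneg (hD : Convex ℝ D) (hf : ∀ t ∈ D, HasDerivAt f (f' t) t)
    (hf' : ∀ t ∈ D, 0 ≤ f' t) : MonotoneOn f D :=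
  monotoneOn_of_hasDerivWithinAt_nonneg hD
    (fun t ht => (hf t ht).continuousAt.continuousWithinAt)
    (fun t ht => (hf t (interior_subset ht)).hasDerivWithinAt)
    (fun t ht => hf' t (interior_subset ht))

lemma antitoneOn_of_hasDerivAt_nonpos (hD : Convex ℝ D) (hf : ∀ t ∈ D, HasDerivAt f (f' t) t)
    (hf' : ∀ t ∈ D, f' t ≤ 0) : AntitoneOn f D :=
  antitoneOn_of_hasDerivWithinAt_nonpos hD
    (fun t ht => (hf t ht).continuousAt.continuousWithinAt)
    (fun t ht => (hf t (interior_subset ht)).hasDerivWithinAt)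
    (fun t ht => hf' t (interior_subset ht))

end monotone

lemma exists_tendsto_of_antitoneOn_of_monotoneOn_sub {f φ : ℝ → ℝ} {T : ℝ}
    (hf : AntitoneOn f (Ici T)) (hfφ : MonotoneOn (f - φ) (Ici T))
    (hφ : ∀ t ∈ Ici T, 0 ≤ φ t) :
    ∃ l, Tendsto f atTop (𝓝 l) := by
  set g : ℝ → ℝ := fun t => f (max T t)
  have hg : Antitone g := fun s t hst =>
    hf (le_max_left T s) (le_max_left T t) (max_le_max_left T hst)
  have hbdd : BddBelow (range g) := by
    refine ⟨f T - φ T, forall_mem_range.2 fun t => ?_⟩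
    have h := hfφ self_mem_Ici (le_max_left T t) (le_max_left T t)
    have := hφ _ (le_max_left T t)
    simp only [Pi.sub_apply] at h
    linarith
  refine ⟨_, (tendsto_atTop_ciInf hg hbdd).congr' ?_⟩
  filter_upwards [eventually_ge_atTop T] with t ht
  simp only [g, max_eq_right ht]

section sqrtODE

variable {F v : ℝ → ℝ} (hv : ∀ t, HasDerivAt v (√(F (v t))) t)
include hv

lemma hasDerivAt_deriv_of_hasDerivAt_sqrt {t c : ℝ} (hF : HasDerivAt F c (v t))
    (hF0 : 0 < F (v t)) : HasDerivAt (deriv v) (c / 2) t := by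
  rw [show deriv v = fun s => √(F (v s)) from funext fun s => (hv s).deriv]
  have hsqrt : √(F (v t)) ≠ 0 := (Real.sqrt_pos.2 hF0).ne'
  refine ((Real.hasDerivAt_sqrt hF0.ne').comp t (hF.comp t (hv t))).congr_deriv ?_
  field_simp

lemma tendsto_atTop_of_hasDerivAt_sqrt (hF : MonotoneOn F (Ici (v 0))) (hF0 : 0 < F (v 0)) :
    Tendsto v atTop atTop := by
  have hmono : Monotone v := monotone_of_hasDerivAt_nonneg hv fun t => Real.sqrt_nonneg _
  set d := √(F (v 0))
  have hlin : MonotoneOn (fun t => v t - d * t) (Ici 0) :=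
    monotoneOn_of_hasDerivAt_nonneg (convex_Ici 0)
      (fun t _ => (hv t).sub ((hasDerivAt_id t).const_mul d |>.congr_deriv (mul_one d)))
      (fun t ht => sub_nonneg.2 <| Real.sqrt_le_sqrt <| hF self_mem_Ici (hmono ht) (hmono ht))
  refine tendsto_atTop_mono' atTop ?_ <|
    tendsto_atTop_add_const_left _ (v 0) <| tendsto_id.const_mul_atTop (Real.sqrt_pos.2 hF0)
  filter_upwards [eventually_ge_atTop 0] with t ht
  have := hlin self_mem_Ici ht ht
  simp only [mul_zero, sub_zero] at this
  simp only [id]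
  linarith

end sqrtODE

lemma tendsto_mul_rpow_two_sub_atTop {N : ℝ} (hN : 2 < N) (c : ℝ) :
    Tendsto (fun x : ℝ => c * x ^ (2 - N)) atTop (𝓝 0) := by
  simpa [neg_sub] using (tendsto_rpow_neg_atTop (sub_pos.2 hN)).const_mul c

section sqrtBounds

variable {N x y : ℝ} (hN : 0 < N)
include hN

lemma sqrt_div_le_one_div_sqrt (hx : 0 < x) (h : N * y ≤ x ^ 2) : √y / x ≤ 1 / √N := by
  rw [div_le_div_iff₀ hx (Real.sqrt_pos.2 hN), one_mul, ← Real.sqrt_mul' y hN.le]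
  calc √(y * N) ≤ √(x ^ 2) := Real.sqrt_le_sqrt (by linarith)
    _ = x := Real.sqrt_sq hx.le

lemma one_div_sqrt_le_sqrt_div_add (hx : 2 ≤ x) (h : x ^ 2 - 1 ≤ N * y) :
    1 / √N ≤ √y / x + 2 * √y / x ^ 3 := by
  have hx0 : 0 < x := by linarith
  have hsN := Real.sqrt_pos.2 hN
  set r := √N * √y
  have hr0 : 0 ≤ r := by positivity
  have hr2 : r ^ 2 = N * y := by
    rw [mul_pow, Real.sq_sqrt hN.le, Real.sq_sqrt (by nlinarith)]
  -- squaring reduces this to `x ^ 6 ≤ (x ^ 2 - 1) * (x ^ 2 + 2) ^ 2 = x ^ 6 + 3 * x ^ 4 - 4`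
  have key : x ^ 3 ≤ r * (x ^ 2 + 2) := by
    rw [← pow_le_pow_iff_left₀ (by positivity) (by positivity) two_ne_zero, mul_pow, hr2]
    nlinarith [pow_le_pow_left₀ (by norm_num) hx 4]
  rw [div_add_div _ _ hx0.ne' (by positivity), div_le_div_iff₀ hsN (by positivity)]
  nlinarith

end sqrtBounds

lemma exists_tendsto_log_sub_div_sqrt {N cs : ℝ} {v : ℝ → ℝ} (hN : 2 < N) (hcs : 0 ≤ cs)
    (hv : ∀ t, HasDerivAt v (√(quasiEinsteinF N cs (v t))) t) (hvtop : Tendsto v atTop atTop) :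
    ∃ l, Tendsto (fun t => log (v t) - t / √N) atTop (𝓝 l) := by
  have hN0 : 0 < N := by linarith
  obtain ⟨T, hT⟩ := eventually_atTop.1 <| (hvtop.eventually_ge_atTop 2).and <|
    hvtop.eventually <| (tendsto_mul_rpow_two_sub_atTop hN (2 * N * cs)).eventually <|
      eventually_le_nhds one_pos
  have hv0 : ∀ t ∈ Ici T, v t ≠ 0 := fun t ht => by linarith [(hT t ht).1]
  have hlog : ∀ t ∈ Ici T, HasDerivAt (fun s => log (v s) - s / √N)
      (√(quasiEinsteinF N cs (v t)) / v t - 1 / √N) t := fun t ht =>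
    ((hv t).log (hv0 t ht)).sub ((hasDerivAt_id t).div_const _)
  have hinv : ∀ t ∈ Ici T, HasDerivAt (fun s => (v s ^ 2)⁻¹)
      (-(2 * √(quasiEinsteinF N cs (v t)) / v t ^ 3)) t := fun t ht => by
    refine (((hv t).pow 2).inv (pow_ne_zero 2 (hv0 t ht))).congr_deriv ?_
    have := hv0 t ht
    simp only [Pi.pow_apply]
    field_simp
    ring
  refine exists_tendsto_of_antitoneOn_of_monotoneOn_sub (φ := fun s => (v s ^ 2)⁻¹)
    (antitoneOn_of_hasDerivAt_nonpos (convex_Ici T) hlog fun t ht => ?_)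
    (monotoneOn_of_hasDerivAt_nonneg (convex_Ici T) (fun t ht => (hlog t ht).sub (hinv t ht))
      fun t ht => ?_) fun t _ => by positivity
  · rw [sub_nonpos]
    refine sqrt_div_le_one_div_sqrt hN0 (by linarith [(hT t ht).1]) ?_
    rw [mul_quasiEinsteinF hN0.ne']
    linarith [(hT t ht).2]
  · have hε : 0 ≤ 2 * N * cs * v t ^ (2 - N) :=
      mul_nonneg (by positivity) (Real.rpow_nonneg (by linarith [(hT t ht).1]) _)
    have := one_div_sqrt_le_sqrt_div_add (y := quasiEinsteinF N cs (v t)) hN0 (hT t ht).1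
      (by rw [mul_quasiEinsteinF hN0.ne']; linarith)
    linarith

lemma sqrt_sub_levelMeanCurvature_mul_sq_eq {N cs x s ε : ℝ} (hN : 0 < N) (hx : 0 < x)
    (hs : 0 < s) (hsx : √(N * quasiEinsteinF N cs x) = s * x)
    (hε : 2 * N * cs * x ^ (2 - N) = ε) :
    (√N - levelMeanCurvature N cs x) * x ^ 2
      = ((1 - ε) * ((N - 1) * s - 1) / (s * (1 + s)) - (2 - N) * ε / (2 * s)) / √N := by
  have hF' : quasiEinsteinF' N cs x = (2 * x + (2 - N) * ε / x) / N := by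
    rw [quasiEinsteinF', ← hε, show 1 - N = 2 - N - 1 by ring, Real.rpow_sub_one hx.ne']
    field_simp
  have hsq : (s * x) ^ 2 = x ^ 2 - 1 + ε := by
    rw [← hsx, Real.sq_sqrt (Real.sqrt_pos.1 (hsx ▸ mul_pos hs hx)).le,
      mul_quasiEinsteinF hN.ne', hε]
  have hw : √(quasiEinsteinF N cs x) = s * x / √N := by
    rw [← hsx, Real.sqrt_mul hN.le]
    field_simp
  obtain ⟨r, hr, rfl⟩ : ∃ r, 0 < r ∧ N = r ^ 2 :=
    ⟨√N, Real.sqrt_pos.2 hN, (Real.sq_sqrt hN.le).symm⟩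
  rw [Real.sqrt_sq hr.le] at hw ⊢
  rw [levelMeanCurvature, hF', hw]
  field_simp
  linear_combination (2 + 2 * s - 2 * r ^ 2 * s) * hsq

lemma tendsto_sqrt_sub_levelMeanCurvature_mul_sq {N : ℝ} (hN : 2 < N) (cs : ℝ) :
    Tendsto (fun x => (√N - levelMeanCurvature N cs x) * x ^ 2) atTop
      (𝓝 ((N - 2) / (2 * √N))) := by
  have hN0 : 0 < N := by linarith
  set ε : ℝ → ℝ := fun x => 2 * N * cs * x ^ (2 - N)
  have hε : Tendsto ε atTop (𝓝 0) := tendsto_mul_rpow_two_sub_atTop hN (2 * N * cs)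
  set s : ℝ → ℝ := fun x => √(N * quasiEinsteinF N cs x) / x
  have hs : Tendsto s atTop (𝓝 1) := by
    have h : Tendsto (fun x => 1 - (1 - ε x) / x ^ 2) atTop (𝓝 1) := by
      simpa using tendsto_const_nhds.sub
        ((tendsto_const_nhds.sub hε).div_atTop (tendsto_pow_atTop two_ne_zero))
    have h' : Tendsto (fun x => √(1 - (1 - ε x) / x ^ 2)) atTop (𝓝 1) := by
      simpa using h.sqrt
    refine h'.congr' ?_
    filter_upwards [eventually_gt_atTop 0] with x hx
    rw [show s x = √(N * quasiEinsteinF N cs x) / √(x ^ 2) by rw [Real.sqrt_sq hx.le],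
      ← Real.sqrt_div' _ (sq_nonneg x), mul_quasiEinsteinF hN0.ne']
    congr 1
    field_simp
    ring
  have hlim : Tendsto
      (fun x => ((1 - ε x) * ((N - 1) * s x - 1) / (s x * (1 + s x)) -
        (2 - N) * ε x / (2 * s x)) / √N)
      atTop (𝓝 (((1 - 0) * ((N - 1) * 1 - 1) / (1 * (1 + 1)) - (2 - N) * 0 / (2 * 1)) / √N)) :=
    ((((tendsto_const_nhds.sub hε).mul ((hs.const_mul (N - 1)).sub_const 1)).div
      (hs.mul (hs.const_add 1)) (by norm_num)).sub
      ((hε.const_mul (2 - N)).div (hs.const_mul 2) (by norm_num))).div_const √N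
  rw [show ((1 - 0) * ((N - 1) * 1 - 1) / (1 * (1 + 1)) - (2 - N) * 0 / (2 * 1)) / √N
    = (N - 2) / (2 * √N) by ring] at hlim
  refine hlim.congr' ?_
  filter_upwards [eventually_gt_atTop 0, hs.eventually (lt_mem_nhds one_pos)] with x hx hsx
  exact (sqrt_sub_levelMeanCurvature_mul_sq_eq hN0 hx hsx
    (div_mul_cancel₀ _ hx.ne').symm rfl).symm

lemma exists_tendsto_sqrt_sub_levelMeanCurvature_mul_exp {N cs : ℝ} {v : ℝ → ℝ} (hN : 2 < N)
    (hcs : 0 ≤ cs) (hv : ∀ t, HasDerivAt v (√(quasiEinsteinF N cs (v t))) t)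
    (hvtop : Tendsto v atTop atTop) :
    ∃ A, 0 < A ∧ Tendsto (fun t => (√N - levelMeanCurvature N cs (v t)) * exp (2 * t / √N))
      atTop (𝓝 A) := by
  have hN2 : 0 < N - 2 := by linarith
  obtain ⟨l, hl⟩ := exists_tendsto_log_sub_div_sqrt hN hcs hv hvtop
  refine ⟨(N - 2) / (2 * √N) * exp (-2 * l), by positivity, ?_⟩
  refine (((tendsto_sqrt_sub_levelMeanCurvature_mul_sq hN cs).comp hvtop).mul
    ((continuous_exp.tendsto _).comp (hl.const_mul (-2)))).congr' ?_
  filter_upwards [hvtop.eventually_gt_atTop 0] with t hvt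
  have hvsq : 0 < v t ^ 2 := pow_pos hvt 2
  have hexp : exp (-2 * (log (v t) - t / √N)) * v t ^ 2 = exp (2 * t / √N) := by
    rw [show -2 * (log (v t) - t / √N) = 2 * t / √N - log (v t ^ 2) by rw [Real.log_pow]; ring,
      exp_sub, exp_log hvsq, div_mul_cancel₀ _ hvsq.ne']
  simp only [Function.comp]
  linear_combination (√N - levelMeanCurvature N cs (v t)) * hexp

theorem stmt_16_general (N : ℝ) (hN : 2 < N)
    (cs a : ℝ) (hcs : cs = (N - 2) ^ ((N - 2) / 2) / N ^ ((N + 2) / 2))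
    (ha : a = Real.sqrt ((N - 2) / N))
    (F : ℝ → ℝ) (hF : ∀ v, F v = (v ^ 2 - 1) / N + 2 * cs * v ^ (2 - N))
    (v : ℝ → ℝ) (hva : ∀ t, a < v t)
    (hvd : ∀ t, HasDerivAt v (Real.sqrt (F (v t))) t)
    (H : ℝ → ℝ)
    (hH : ∀ t, H t = deriv (deriv v) t / deriv v t + (N - 1) * deriv v t / v t) :
    (∀ t, DifferentiableAt ℝ (deriv v) t) ∧
    ∃ A : ℝ, 0 < A ∧
      Filter.Tendsto (fun t => (Real.sqrt N - H t) * Real.exp (2 * t / Real.sqrt N))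
        Filter.atTop (𝓝 A) := by
  have hN2 : 0 < (N - 2) / N := div_pos (by linarith) (by linarith)
  have ha0 : 0 < a := ha ▸ Real.sqrt_pos.2 hN2
  have ha2 : a ^ 2 = (N - 2) / N := ha ▸ Real.sq_sqrt hN2.le
  rw [critical_constant_eq hN, ← ha] at hcs
  obtain rfl : F = quasiEinsteinF N cs := funext hF
  have hFpos : ∀ t, 0 < quasiEinsteinF N cs (v t) := fun t =>
    hcs ▸ quasiEinsteinF_critical_pos hN ha0 ha2 (hva t)
  have hv2 : ∀ t, HasDerivAt (deriv v) (quasiEinsteinF' N cs (v t) / 2) t := fun t =>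
    hasDerivAt_deriv_of_hasDerivAt_sqrt hvd (hasDerivAt_quasiEinsteinF (ha0.trans (hva t)))
      (hFpos t)
  refine ⟨fun t => (hv2 t).differentiableAt, ?_⟩
  have hvtop : Tendsto v atTop atTop := tendsto_atTop_of_hasDerivAt_sqrt hvd
    (hcs ▸ (strictMonoOn_quasiEinsteinF_critical hN ha0).monotoneOn.mono
      (Ici_subset_Ici.2 (hva 0).le)) (hFpos 0)
  obtain ⟨A, hA, hlim⟩ := exists_tendsto_sqrt_sub_levelMeanCurvature_mul_exp hN
    (hcs ▸ div_nonneg (Real.rpow_nonneg ha0.le N) (mul_nonneg (by linarith) (by linarith)))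
    hvd hvtop
  refine ⟨A, hA, hlim.congr fun t => ?_⟩
  rw [hH, (hv2 t).deriv, (hvd t).deriv, levelMeanCurvature, div_div]

theorem stmt_16 (N : ℝ) (hN : 2 < N)
    (cs a : ℝ) (hcs : cs = (N - 2) ^ ((N - 2) / 2) / N ^ ((N + 2) / 2))
    (ha : a = Real.sqrt ((N - 2) / N))
    (F : ℝ → ℝ) (hF : ∀ v, F v = (v ^ 2 - 1) / N + 2 * cs * v ^ (2 - N))
    (v : ℝ → ℝ) (hva : ∀ t, a < v t) (hv0 : v 0 = 1)
    (hvd : ∀ t, HasDerivAt v (Real.sqrt (F (v t))) t)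
    (H : ℝ → ℝ)
    (hH : ∀ t, H t = deriv (deriv v) t / deriv v t + (N - 1) * deriv v t / v t) :
    (∀ t, DifferentiableAt ℝ (deriv v) t) ∧
    ∃ A : ℝ, 0 < A ∧
      Filter.Tendsto (fun t => (Real.sqrt N - H t) * Real.exp (2 * t / Real.sqrt N))
        Filter.atTop (𝓝 A) :=
  stmt_16_general N hN cs a hcs ha F hF v hva hvd H hH
end

section
/- Define G(x) = 2e^{x−1} − 2x for x ∈ ℝ. Then G(x) > 0 for all x < 1, and there exists a unique differentiable function φ : ℝ → ℝ such that φ(t) < 1 for all t, φ(0) = 0, and φ′(t) = −√(G(φ(t))) for all t ∈ ℝ. Moreover, φ is strictly decreasing, φ(t) → 1 as t → −∞, and φ(t) → −∞ as t → ∞. -/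
/-!
Separation of variables. Let `T y = ∫_y^0 dx / √G(x)` be the time a solution needs to travel
from `0` to `y`. Every solution `φ < 1` with `φ 0 = 0` satisfies `T (φ t) = t`, since `T ∘ φ` has
derivative `1`. As `G > 0` on `(-∞, 1)`, `T` is strictly decreasing there; it is also onto `ℝ`:
the double zero of `G` at `1` gives `√G(x) ≤ 1 - x`, hence `T y ≤ log (1 - y) → -∞` as `y → 1`,
while `G(x) ≤ 2 (1 - x)` gives `T y ≥ √(2 (1 - y)) - √2 → ∞` as `y → -∞`. So the solution is
unique, namely the inverse function of `T`, which is differentiable by the inverse function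
theorem, and monotonicity and the limits of `φ` are those of `T`.
-/

open Real Filter Set Topology Function

section LeftInverse

variable {T ψ : ℝ → ℝ} {b : ℝ}

theorem antitoneOn_Iio_of_hasDerivAt_nonpos {f f' : ℝ → ℝ} (hf : ∀ x < b, HasDerivAt f (f' x) x)
    (hf' : ∀ x < b, f' x ≤ 0) : AntitoneOn f (Iio b) :=
  antitoneOn_of_hasDerivWithinAt_nonpos (convex_Iio b)
    (fun x hx => (hf x hx).continuousAt.continuousWithinAt)
    (by rw [interior_Iio]; exact fun x hx => (hf x hx).hasDerivWithinAt)
    (by rwa [interior_Iio])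

theorem strictAntiOn_Iio_of_hasDerivAt_neg {f f' : ℝ → ℝ} (hf : ∀ x < b, HasDerivAt f (f' x) x)
    (hf' : ∀ x < b, f' x < 0) : StrictAntiOn f (Iio b) :=
  strictAntiOn_of_hasDerivWithinAt_neg (convex_Iio b)
    (fun x hx => (hf x hx).continuousAt.continuousWithinAt)
    (by rw [interior_Iio]; exact fun x hx => (hf x hx).hasDerivWithinAt)
    (by rwa [interior_Iio])

theorem AntitoneOn.strictAnti_of_leftInverse (hT : AntitoneOn T (Iio b)) (hψ : ∀ t, ψ t < b)
    (hTψ : LeftInverse T ψ) : StrictAnti ψ := by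
  intro s t hst
  by_contra! h
  have := hT (hψ s) (hψ t) h
  rw [hTψ, hTψ] at this
  linarith

theorem AntitoneOn.tendsto_atBot_of_leftInverse (hT : AntitoneOn T (Iio b)) (hψ : ∀ t, ψ t < b)
    (hTψ : LeftInverse T ψ) : Tendsto ψ atBot (𝓝 b) := by
  refine tendsto_order.2 ⟨fun a ha => ?_, fun a ha => Eventually.of_forall fun t => (hψ t).trans ha⟩
  filter_upwards [eventually_lt_atBot (T a)] with t ht
  by_contra! h
  have := hT (hψ t) ha h
  rw [hTψ] at this
  linarith

theorem AntitoneOn.tendsto_atTop_of_leftInverse (hT : AntitoneOn T (Iio b)) (hψ : ∀ t, ψ t < b)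
    (hTψ : LeftInverse T ψ) : Tendsto ψ atTop atBot := by
  refine tendsto_atBot.2 fun c => ?_
  have hc : min c (b - 1) < b := (min_le_right _ _).trans_lt (by linarith)
  filter_upwards [eventually_gt_atTop (T (min c (b - 1)))] with t ht
  by_contra! h
  have := hT hc (hψ t) ((min_le_left _ _).trans h.le)
  rw [hTψ] at this
  linarith

theorem StrictAntiOn.continuous_of_leftInverse (hT : StrictAntiOn T (Iio b)) (hψ : ∀ t, ψ t < b)
    (hTψ : LeftInverse T ψ) : Continuous ψ := by
  have hmono : StrictMono fun t => -ψ t := (hT.antitoneOn.strictAnti_of_leftInverse hψ hTψ).neg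
  have hsurj : ∀ y < b, ψ (T y) = y := fun y hy => hT.injOn (hψ _) hy (hTψ (T y))
  have hcont : Continuous fun t => -ψ t := continuous_iff_continuousAt.2 fun t =>
    continuousAt_of_monotoneOn_of_image_mem_nhds (hmono.monotone.monotoneOn univ) univ_mem <|
      mem_of_superset (Ioi_mem_nhds (neg_lt_neg (hψ t))) fun y hy =>
        ⟨T (-y), trivial, by simp only [hsurj _ (neg_lt.1 hy), neg_neg]⟩
  exact continuous_neg_iff.1 hcont

theorem leftInverse_of_hasDerivAt {f : ℝ → ℝ} (hT : ∀ y < b, HasDerivAt T (f y)⁻¹ y)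
    (hf : ∀ y < b, f y ≠ 0) (hψ : ∀ t, ψ t < b) (hψ' : ∀ t, HasDerivAt ψ (f (ψ t)) t)
    (h0 : T (ψ 0) = 0) : LeftInverse T ψ := by
  have hderiv : ∀ t, HasDerivAt (fun t => T (ψ t) - t) 0 t := fun t => by
    have := ((hT _ (hψ t)).comp t (hψ' t)).sub (hasDerivAt_id' t)
    rwa [inv_mul_cancel₀ (hf _ (hψ t)), sub_self] at this
  intro t
  have := is_const_of_deriv_eq_zero (fun t => (hderiv t).differentiableAt)
    (fun t => (hderiv t).deriv) t 0
  simp only [h0] at this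
  linarith

theorem hasDerivAt_of_leftInverse {f : ℝ → ℝ} (hT : ∀ y < b, HasDerivAt T (f y)⁻¹ y)
    (hf : ∀ y < b, f y ≠ 0) (hψ : ∀ t, ψ t < b) (hψc : Continuous ψ) (hTψ : LeftInverse T ψ)
    (t : ℝ) : HasDerivAt ψ (f (ψ t)) t := by
  simpa using HasDerivAt.of_local_left_inverse hψc.continuousAt (hT _ (hψ t))
    (inv_ne_zero (hf _ (hψ t))) (Eventually.of_forall hTψ)

end LeftInverse

namespace ExpandingSoliton

noncomputable def G (x : ℝ) : ℝ := 2 * exp (x - 1) - 2 * x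

noncomputable def travelTime (y : ℝ) : ℝ := ∫ x in y..0, (√(G x))⁻¹

theorem G_pos {x : ℝ} (hx : x ≠ 1) : 0 < G x := by
  have := add_one_lt_exp (sub_ne_zero.2 hx)
  unfold G
  linarith

theorem sqrt_G_pos {x : ℝ} (hx : x ≠ 1) : 0 < √(G x) := sqrt_pos.2 (G_pos hx)

theorem G_le_two_mul_one_sub {x : ℝ} (hx : x ≤ 1) : G x ≤ 2 * (1 - x) := by
  have := exp_le_one_iff.2 (sub_nonpos.2 hx)
  unfold G
  linarith

theorem G_le_one_sub_sq {x : ℝ} (hx : x ≤ 1) : G x ≤ (1 - x) ^ 2 := by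
  set s := 1 - x with hs_def
  have hs : 0 ≤ s := sub_nonneg.2 hx
  have hq : 0 < 1 + s + s ^ 2 / 2 := by positivity
  -- `exp (-s) ≤ 1 / (1 + s + s²/2) ≤ 1 - s + s²/2`, as `(1 + s + s²/2) (1 - s + s²/2) = 1 + s⁴/4`
  have hexp : exp (x - 1) * (1 + s + s ^ 2 / 2) ≤ 1 := by
    rw [show x - 1 = -s by ring, exp_neg, inv_mul_le_iff₀ (exp_pos s), mul_one]
    exact quadratic_le_exp_of_nonneg hs
  have : exp (x - 1) ≤ 1 - s + s ^ 2 / 2 :=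
    le_of_mul_le_mul_right (by nlinarith [pow_nonneg hs 4]) hq
  unfold G
  linarith

theorem continuousOn_inv_sqrt_G : ContinuousOn (fun x => (√(G x))⁻¹) (Iio 1) := fun x hx =>
  ((continuous_sqrt.comp (by unfold G; fun_prop)).continuousAt.inv₀
    (sqrt_G_pos (ne_of_lt hx)).ne').continuousWithinAt

theorem hasDerivAt_travelTime {y : ℝ} (hy : y < 1) : HasDerivAt travelTime (-√(G y))⁻¹ y := by
  rw [inv_neg]
  refine intervalIntegral.integral_hasDerivAt_left ?_
    (continuousOn_inv_sqrt_G.stronglyMeasurableAtFilter isOpen_Iio y hy)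
    (continuousOn_inv_sqrt_G.continuousAt (Iio_mem_nhds hy))
  exact (continuousOn_inv_sqrt_G.mono fun x hx => hx.2.trans_lt (max_lt hy one_pos))
    |>.intervalIntegrable

theorem travelTime_zero : travelTime 0 = 0 := intervalIntegral.integral_same

theorem strictAntiOn_travelTime : StrictAntiOn travelTime (Iio 1) :=
  strictAntiOn_Iio_of_hasDerivAt_neg (fun _ hy => hasDerivAt_travelTime hy) fun _ hy =>
    inv_lt_zero.2 (neg_lt_zero.2 (sqrt_G_pos (ne_of_lt hy)))

theorem sqrt_two_mul_one_sub_sub_sqrt_two_le_travelTime {y : ℝ} (hy : y ≤ 0) :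
    √(2 * (1 - y)) - √2 ≤ travelTime y := by
  have hanti : AntitoneOn (fun y => travelTime y - √(2 * (1 - y))) (Iio 1) := by
    refine antitoneOn_Iio_of_hasDerivAt_nonpos (fun x hx => (hasDerivAt_travelTime hx).sub
      ((((hasDerivAt_id' x).const_sub 1).const_mul 2).sqrt (by linarith))) fun x hx => ?_
    have h := inv_anti₀ (sqrt_G_pos (ne_of_lt hx)) (sqrt_le_sqrt (G_le_two_mul_one_sub hx.le))
    have : (2 : ℝ) * -1 / (2 * √(2 * (1 - x))) = -(√(2 * (1 - x)))⁻¹ := by field_simp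
    rw [this, inv_neg]
    linarith
  simpa [travelTime_zero] using hanti (hy.trans_lt one_pos) (mem_Iio.2 one_pos) hy

theorem travelTime_le_log_one_sub {y : ℝ} (hy₀ : 0 ≤ y) (hy₁ : y < 1) :
    travelTime y ≤ log (1 - y) := by
  have hanti : AntitoneOn (fun y => travelTime y - log (1 - y)) (Iio 1) := by
    refine antitoneOn_Iio_of_hasDerivAt_nonpos (fun x hx => (hasDerivAt_travelTime hx).sub
      (((hasDerivAt_id' x).const_sub 1).log (by linarith))) fun x hx => ?_
    have h := inv_anti₀ (sqrt_G_pos (ne_of_lt hx))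
      (sqrt_le_iff.2 ⟨by linarith, G_le_one_sub_sq hx.le⟩)
    rw [inv_neg, neg_div, one_div]
    linarith
  simpa [travelTime_zero] using hanti (mem_Iio.2 one_pos) hy₁ hy₀

theorem tendsto_travelTime_atBot : Tendsto travelTime atBot atTop := by
  have hlin : Tendsto (fun y : ℝ => 2 * (1 - y)) atBot atTop := by
    simpa [sub_eq_add_neg] using
      (tendsto_atTop_add_const_left _ 1 tendsto_neg_atBot_atTop).const_mul_atTop two_pos
  have hlim : Tendsto (fun y => √(2 * (1 - y)) - √2) atBot atTop := by
    simpa [sub_eq_add_neg] using tendsto_atTop_add_const_right _ (-√2) (tendsto_sqrt_atTop.comp hlin)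
  exact tendsto_atTop_mono' _ ((eventually_le_atBot 0).mono fun y hy =>
    sqrt_two_mul_one_sub_sub_sqrt_two_le_travelTime hy) hlim

theorem tendsto_travelTime_nhdsLT_one : Tendsto travelTime (𝓝[<] 1) atBot := by
  have hlim : Tendsto (fun y => log (1 - y)) (𝓝[<] 1) atBot := by
    refine tendsto_log_nhdsGT_zero.comp (tendsto_nhdsWithin_of_tendsto_nhds_of_eventually_within _
      ?_ ?_)
    · have := (continuous_sub_left (1 : ℝ)).tendsto 1
      rw [sub_self] at this
      exact this.mono_left nhdsWithin_le_nhds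
    · filter_upwards [self_mem_nhdsWithin] with y hy using sub_pos.2 (mem_Iio.1 hy)
  refine tendsto_atBot_mono' _ ?_ hlim
  filter_upwards [Ioo_mem_nhdsLT one_pos] with y hy using travelTime_le_log_one_sub hy.1.le hy.2

theorem exists_travelTime_eq (c : ℝ) : ∃ y < 1, travelTime y = c := by
  obtain ⟨a, hca, ha⟩ :=
    ((tendsto_travelTime_atBot.eventually_ge_atTop c).and (eventually_le_atBot 0)).exists
  obtain ⟨b, hbc, hb⟩ :=
    ((tendsto_travelTime_nhdsLT_one.eventually_le_atBot c).and (Ioo_mem_nhdsLT one_pos)).exists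
  have hcont : ContinuousOn travelTime (Icc a b) := fun x hx =>
    (hasDerivAt_travelTime (hx.2.trans_lt hb.2)).continuousAt.continuousWithinAt
  obtain ⟨y, hy, rfl⟩ := intermediate_value_Icc' (ha.trans hb.1.le) hcont ⟨hbc, hca⟩
  exact ⟨y, hy.2.trans_lt hb.2, rfl⟩

theorem leftInverse_travelTime {ψ : ℝ → ℝ} (hψ : ∀ t, ψ t < 1) (h0 : ψ 0 = 0)
    (hψ' : ∀ t, HasDerivAt ψ (-√(G (ψ t))) t) : LeftInverse travelTime ψ :=
  leftInverse_of_hasDerivAt (f := fun y => -√(G y)) (fun _ hy => hasDerivAt_travelTime hy)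
    (fun _ hy => neg_ne_zero.2 (sqrt_G_pos (ne_of_lt hy)).ne') hψ hψ' (by rw [h0, travelTime_zero])

noncomputable def potential (t : ℝ) : ℝ := invFunOn travelTime (Iio 1) t

theorem potential_lt_one (t : ℝ) : potential t < 1 := (invFunOn_pos (exists_travelTime_eq t)).1

theorem leftInverse_travelTime_potential : LeftInverse travelTime potential := fun t =>
  (invFunOn_pos (exists_travelTime_eq t)).2

theorem potential_zero : potential 0 = 0 :=
  strictAntiOn_travelTime.injOn (potential_lt_one 0) (mem_Iio.2 one_pos)
    (by rw [leftInverse_travelTime_potential, travelTime_zero])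

theorem hasDerivAt_potential (t : ℝ) : HasDerivAt potential (-√(G (potential t))) t :=
  hasDerivAt_of_leftInverse (f := fun y => -√(G y)) (fun _ hy => hasDerivAt_travelTime hy)
    (fun _ hy => neg_ne_zero.2 (sqrt_G_pos (ne_of_lt hy)).ne') potential_lt_one
    (strictAntiOn_travelTime.continuous_of_leftInverse potential_lt_one
      leftInverse_travelTime_potential)
    leftInverse_travelTime_potential t

end ExpandingSoliton

open ExpandingSoliton

theorem stmt_17 (G : ℝ → ℝ) (hG : ∀ x, G x = 2 * Real.exp (x - 1) - 2 * x) :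
    (∀ x < (1 : ℝ), 0 < G x) ∧
    (∃! φ : ℝ → ℝ, (∀ t, φ t < 1) ∧ φ 0 = 0 ∧
      ∀ t, HasDerivAt φ (-Real.sqrt (G (φ t))) t) ∧
    (∀ φ : ℝ → ℝ, ((∀ t, φ t < 1) ∧ φ 0 = 0 ∧ ∀ t, HasDerivAt φ (-Real.sqrt (G (φ t))) t) →
      StrictAnti φ ∧ Filter.Tendsto φ Filter.atBot (𝓝 1) ∧
        Filter.Tendsto φ Filter.atTop Filter.atBot) := by
  obtain rfl : G = ExpandingSoliton.G := funext hG
  have hT := strictAntiOn_travelTime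
  refine ⟨fun x hx => G_pos (ne_of_lt hx),
    ⟨potential, ⟨potential_lt_one, potential_zero, hasDerivAt_potential⟩, ?_⟩, ?_⟩
  · rintro ψ ⟨hψ, h0, hψ'⟩
    funext t
    exact hT.injOn (hψ t) (potential_lt_one t)
      (by rw [leftInverse_travelTime hψ h0 hψ', leftInverse_travelTime_potential])
  · rintro ψ ⟨hψ, h0, hψ'⟩
    have hTψ := leftInverse_travelTime hψ h0 hψ'
    exact ⟨hT.antitoneOn.strictAnti_of_leftInverse hψ hTψ,
      hT.antitoneOn.tendsto_atBot_of_leftInverse hψ hTψ,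
      hT.antitoneOn.tendsto_atTop_of_leftInverse hψ hTψ⟩
end

section
/- Define G(x) = 2e^{x−1} − 2x for x ∈ ℝ, and let φ : ℝ → ℝ be the unique differentiable function with φ(t) < 1 for all t, φ(0) = 0, and φ′(t) = −√(G(φ(t))) for all t ∈ ℝ. Then lim_{t→−∞} φ′(t)/(φ(t)−1) = 1. -/
open Real Filter Set Topology

/-!
The potential `G` is positive off `x = 1`, so `φ` is strictly decreasing; were `φ` bounded away
from `1` as `t → -∞`, its slope would be bounded away from `0` there and `φ` would eventually
exceed `1`. Hence `φ → 1⁻`, and the claim reduces to `√(G x) / (1 - x) → 1` as `x → 1⁻`, which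
follows from `G x / (x - 1)² → 1`, i.e. from `G` having a double zero at `1` with `G''(1) = 2`.
-/

/-- The potential `G` of the soliton equation `φ'² = G(φ)`. -/
noncomputable def solitonPotential (x : ℝ) : ℝ := 2 * exp (x - 1) - 2 * x

lemma solitonPotential_pos {x : ℝ} (hx : x ≠ 1) : 0 < solitonPotential x := by
  have := add_one_lt_exp (sub_ne_zero.2 hx)
  unfold solitonPotential
  linarith

lemma continuous_solitonPotential : Continuous solitonPotential := by
  unfold solitonPotential
  fun_prop

lemma hasDerivAt_solitonPotential (x : ℝ) :
    HasDerivAt solitonPotential (2 * exp (x - 1) - 2) x := by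
  have := (((hasDerivAt_id x).sub_const 1).exp.const_mul 2).fun_sub ((hasDerivAt_id x).const_mul 2)
  simp only [id, mul_one] at this
  exact this

lemma tendsto_solitonPotential_div_sq :
    Tendsto (fun x => solitonPotential x / (x - 1) ^ 2) (𝓝[≠] 1) (𝓝 1) := by
  have hexp : HasDerivAt (fun x => exp (x - 1)) 1 1 := by
    simpa using (hasDerivAt_exp (1 - 1)).comp_sub_const 1 1
  have hslope : Tendsto (fun x => (exp (x - 1) - 1) / (x - 1)) (𝓝[≠] 1) (𝓝 1) := by
    simpa [slope_fun_def_field] using hasDerivAt_iff_tendsto_slope.1 hexp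
  refine HasDerivAt.lhopital_zero_nhdsNE (Eventually.of_forall hasDerivAt_solitonPotential)
    (g' := fun x => 2 * (x - 1))
    (Eventually.of_forall fun x => by simpa using ((hasDerivAt_id x).sub_const 1).fun_pow 2) ?_
    ?_ ?_ ?_
  · filter_upwards [self_mem_nhdsWithin] with x hx
    exact mul_ne_zero two_ne_zero (sub_ne_zero.2 hx)
  · simpa [solitonPotential] using
      (hasDerivAt_solitonPotential 1).continuousAt.tendsto.mono_left nhdsWithin_le_nhds
  · exact tendsto_nhdsWithin_of_tendsto_nhds
      (by simpa using ((continuous_sub_right (1 : ℝ)).fun_pow 2).tendsto 1)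
  · refine hslope.congr' ?_
    filter_upwards [self_mem_nhdsWithin] with x hx
    have : x - 1 ≠ 0 := sub_ne_zero.2 hx
    field_simp

lemma tendsto_sqrt_solitonPotential_div_one_sub :
    Tendsto (fun x => √(solitonPotential x) / (1 - x)) (𝓝[<] 1) (𝓝 1) := by
  have h := (continuous_sqrt.tendsto 1).comp
    (tendsto_solitonPotential_div_sq.mono_left (nhdsLT_le_nhdsNE 1))
  rw [sqrt_one] at h
  refine h.congr' ?_
  filter_upwards [self_mem_nhdsWithin] with x (hx : x < 1)
  rw [Function.comp_apply, sqrt_div' _ (sq_nonneg _), sqrt_sq_eq_abs, abs_of_neg (sub_neg.2 hx),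
    neg_sub]

lemma tendsto_nhdsLT_atBot_of_hasDerivAt_neg {g φ : ℝ → ℝ} {b : ℝ} (hg : ContinuousOn g (Iio b))
    (hg_pos : ∀ x < b, 0 < g x) (hφb : ∀ t, φ t < b) (hφd : ∀ t, HasDerivAt φ (-g (φ t)) t) :
    Tendsto φ atBot (𝓝[<] b) := by
  have hanti : StrictAnti φ :=
    strictAnti_of_hasDerivAt_neg hφd fun t => neg_neg_of_pos (hg_pos _ (hφb t))
  have hdiff : Differentiable ℝ φ := fun t => (hφd t).differentiableAt
  have hunbdd : ∀ a < b, ∃ t, a < φ t := by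
    intro a ha
    by_contra! hle
    obtain ⟨c, hc, hc_min⟩ := isCompact_Icc.exists_isMinOn (nonempty_Icc.2 (hle 0))
      (hg.mono fun x hx => hx.2.trans_lt ha)
    have hm : 0 < g c := hg_pos c (hc.2.trans_lt ha)
    -- on `t ≤ 0` the solution stays in `[φ 0, a]`, where `g ≥ g c`, so going backwards it
    -- grows at least linearly and reaches `b` by time `(φ 0 - b) / g c`
    have hslope : ∀ t ≤ 0, φ 0 - φ t ≤ -g c * (0 - t) := fun t ht =>
      (convex_Iic 0).image_sub_le_mul_sub_of_deriv_le hdiff.continuous.continuousOn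
        hdiff.differentiableOn (fun s hs => by
          rw [interior_Iic] at hs
          rw [(hφd s).deriv, neg_le_neg_iff]
          exact hc_min ⟨hanti.antitone hs.le, hle s⟩) t ht 0 self_mem_Iic ht
    have ht : (φ 0 - b) / g c ≤ 0 := div_nonpos_of_nonpos_of_nonneg (sub_nonpos.2 (hφb 0).le) hm.le
    have := hslope _ ht
    rw [zero_sub, neg_mul_neg, mul_div_cancel₀ _ hm.ne'] at this
    linarith [hφb ((φ 0 - b) / g c)]
  refine tendsto_nhdsWithin_iff.2 ⟨tendsto_order.2 ⟨fun a ha => ?_, fun a ha =>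
    Eventually.of_forall fun t => (hφb t).trans ha⟩, Eventually.of_forall hφb⟩
  obtain ⟨t₀, ht₀⟩ := hunbdd a ha
  filter_upwards [eventually_le_atBot t₀] with t ht
  exact ht₀.trans_le (hanti.antitone ht)

theorem stmt_18_general (G : ℝ → ℝ) (hG : ∀ x, G x = 2 * Real.exp (x - 1) - 2 * x)
    (φ : ℝ → ℝ) (hφ1 : ∀ t, φ t < 1)
    (hφd : ∀ t, HasDerivAt φ (-Real.sqrt (G (φ t))) t) :
    Filter.Tendsto (fun t => deriv φ t / (φ t - 1)) Filter.atBot (𝓝 1) := by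
  obtain rfl : G = solitonPotential := funext hG
  have hφ : Tendsto φ atBot (𝓝[<] 1) :=
    tendsto_nhdsLT_atBot_of_hasDerivAt_neg continuous_solitonPotential.sqrt.continuousOn
      (fun x hx => sqrt_pos.2 (solitonPotential_pos hx.ne)) hφ1 hφd
  refine (tendsto_sqrt_solitonPotential_div_one_sub.comp hφ).congr fun t => ?_
  rw [Function.comp_apply, (hφd t).deriv, neg_div, ← div_neg, neg_sub]

theorem stmt_18 (G : ℝ → ℝ) (hG : ∀ x, G x = 2 * Real.exp (x - 1) - 2 * x)
    (φ : ℝ → ℝ) (hφ1 : ∀ t, φ t < 1) (hφ0 : φ 0 = 0)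
    (hφd : ∀ t, HasDerivAt φ (-Real.sqrt (G (φ t))) t) :
    Filter.Tendsto (fun t => deriv φ t / (φ t - 1)) Filter.atBot (𝓝 1) :=
  stmt_18_general G hG φ hφ1 hφd
end

section
/- Let n be a real number. Define G(x) = 2e^{x−1} − 2x for x ∈ ℝ, and let φ : ℝ → ℝ be the unique differentiable function with φ(t) < 1 for all t, φ(0) = 0, and φ′(t) = −√(G(φ(t))) for all t ∈ ℝ. Define R(t) = −2(e^{φ(t)−1} − 1)/φ′(t) + 2 − n (note φ′(t) < 0 for all t, so R is well defined). Then lim_{t→−∞} R(t) = −n. -/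
open Real Filter Set Topology

/-!
Since `G > 0` on `(-∞, 1)`, `φ` is strictly decreasing and bounded above by `1`, so it has a
limit `L ≤ 1` at `-∞`. If `L < 1`, then `G(φ) ≥ G(L) > 0` because `G` decreases on `(-∞, 1]`,
so the slope of `φ` stays below `-√G(L)` and `φ` is unbounded at `-∞`; hence `L = 1`. Writing
`u = φ - 1 → 0⁻`, the quotient `(e^u - 1)/φ'` is `√((e^u - 1)² / (2(e^u - 1 - u)))`, which
tends to `1` by L'Hôpital, so `R → -2 + 2 - n = -n`.
-/

theorem tendsto_sq_exp_sub_one_div :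
    Tendsto (fun u : ℝ => (exp u - 1) ^ 2 / (2 * (exp u - 1 - u))) (𝓝[≠] 0) (𝓝 1) := by
  have hd : ∀ u : ℝ, HasDerivAt (fun u => (exp u - 1) ^ 2) (2 * (exp u - 1) * exp u) u := by
    intro u
    simpa using ((hasDerivAt_exp u).sub_const 1).fun_pow 2
  have hcont : ∀ f : ℝ → ℝ, Continuous f → f 0 = 0 → Tendsto f (𝓝[≠] 0) (𝓝 0) := fun f hf h0 =>
    (hf.tendsto' 0 0 h0).mono_left nhdsWithin_le_nhds
  refine HasDerivAt.lhopital_zero_nhdsNE (g' := fun u => 2 * (exp u - 1))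
    (Eventually.of_forall hd)
    (Eventually.of_forall fun u =>
      (((hasDerivAt_exp u).sub_const 1).sub (hasDerivAt_id u)).const_mul 2)
    ?_ (hcont _ (by fun_prop) (by simp)) (hcont _ (by fun_prop) (by simp)) ?_
  · filter_upwards [self_mem_nhdsWithin] with u hu
    simpa [sub_eq_zero] using hu
  · refine (tendsto_exp_nhds_zero_nhds_one.mono_left nhdsWithin_le_nhds).congr' ?_
    filter_upwards [self_mem_nhdsWithin] with u hu
    have : exp u - 1 ≠ 0 := by simpa [sub_eq_zero] using hu
    field_simp

theorem two_mul_exp_sub_one_sub_pos {x : ℝ} (hx : x ≠ 1) : 0 < 2 * exp (x - 1) - 2 * x := by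
  linarith [add_one_lt_exp (sub_ne_zero.mpr hx)]

theorem antitoneOn_two_mul_exp_sub_one_sub :
    AntitoneOn (fun x : ℝ => 2 * exp (x - 1) - 2 * x) (Iic 1) := by
  refine antitoneOn_of_deriv_nonpos (convex_Iic 1) (by fun_prop) (by fun_prop) fun x hx => ?_
  rw [interior_Iic, mem_Iio] at hx
  have : exp (x - 1) ≤ 1 := exp_le_one_iff.mpr (by linarith)
  have hd : HasDerivAt (fun x : ℝ => 2 * exp (x - 1) - 2 * x) (2 * exp (x - 1) - 2) x := by
    simpa using (((hasDerivAt_id x).sub_const 1).exp.const_mul 2).fun_sub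
      ((hasDerivAt_id x).const_mul 2)
  rw [hd.deriv]
  linarith

theorem tendsto_exp_sub_one_div_neg_sqrt :
    Tendsto (fun x : ℝ => (exp (x - 1) - 1) / -√(2 * exp (x - 1) - 2 * x)) (𝓝[<] 1) (𝓝 1) := by
  have hshift : Tendsto (fun x : ℝ => x - 1) (𝓝[<] 1) (𝓝[≠] 0) := by
    refine tendsto_nhdsWithin_of_tendsto_nhds_of_eventually_within _ ?_ ?_
    · exact ((continuous_sub_right 1).tendsto' 1 0 (sub_self 1)).mono_left nhdsWithin_le_nhds
    · filter_upwards [self_mem_nhdsWithin] with x (hx : x < 1)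
      exact sub_ne_zero.mpr hx.ne
  have := (tendsto_sq_exp_sub_one_div.comp hshift).sqrt
  rw [sqrt_one] at this
  refine this.congr' ?_
  filter_upwards [self_mem_nhdsWithin] with x (hx : x < 1)
  have hneg : exp (x - 1) - 1 < 0 := by
    linarith [exp_lt_one_iff.mpr (sub_neg.mpr hx)]
  simp only [Function.comp_apply]
  rw [sqrt_div (sq_nonneg _), sqrt_sq_eq_abs, abs_of_neg hneg, div_neg, neg_div]
  ring_nf

theorem tendsto_atBot_atTop_of_deriv_le_neg {f : ℝ → ℝ} (hf : Differentiable ℝ f) {c : ℝ}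
    (hc : 0 < c) (hf' : ∀ t, deriv f t ≤ -c) : Tendsto f atBot atTop := by
  have hlin : Tendsto (fun t => f 0 - c * t) atBot atTop :=
    tendsto_atTop_add_const_left _ _ <|
      (tendsto_neg_atBot_atTop.atTop_mul_const hc).congr fun t => by ring
  refine tendsto_atTop_mono' atBot ?_ hlin
  filter_upwards [eventually_le_atBot 0] with t ht
  linarith [image_sub_le_mul_sub_of_deriv_le hf hf' ht]

theorem tendsto_atBot_nhdsLT_one_of_hasDerivAt_neg_sqrt {φ : ℝ → ℝ} (hφ1 : ∀ t, φ t < 1)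
    (hφd : ∀ t, HasDerivAt φ (-√(2 * exp (φ t - 1) - 2 * φ t)) t) :
    Tendsto φ atBot (𝓝[<] 1) := by
  have hdiff : Differentiable ℝ φ := fun t => (hφd t).differentiableAt
  have hanti : Antitone φ := antitone_of_deriv_nonpos hdiff fun t => by
    rw [(hφd t).deriv, neg_nonpos]
    exact sqrt_nonneg _
  have hbdd : BddAbove (range φ) := ⟨1, forall_mem_range.2 fun t => (hφ1 t).le⟩
  have hsup : ⨆ t, φ t = 1 := by
    refine le_antisymm (ciSup_le fun t => (hφ1 t).le) (not_lt.mp fun hL => ?_)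
    set L := ⨆ t, φ t
    have hc : 0 < √(2 * exp (L - 1) - 2 * L) := sqrt_pos.mpr (two_mul_exp_sub_one_sub_pos hL.ne)
    have hφ' : ∀ t, deriv φ t ≤ -√(2 * exp (L - 1) - 2 * L) := fun t => by
      have hφL : φ t ≤ L := le_ciSup hbdd t
      rw [(hφd t).deriv, neg_le_neg_iff]
      exact sqrt_le_sqrt (antitoneOn_two_mul_exp_sub_one_sub (hφL.trans hL.le) hL.le hφL)
    obtain ⟨t, ht⟩ :=
      ((tendsto_atBot_atTop_of_deriv_le_neg hdiff hc hφ').eventually_gt_atTop 1).exists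
    exact (hφ1 t).not_gt ht
  exact tendsto_nhdsWithin_iff.mpr
    ⟨hsup ▸ tendsto_atBot_ciSup hanti hbdd, Eventually.of_forall hφ1⟩

theorem stmt_19_general (n : ℝ) (G : ℝ → ℝ) (hG : ∀ x, G x = 2 * Real.exp (x - 1) - 2 * x)
    (φ : ℝ → ℝ) (hφ1 : ∀ t, φ t < 1)
    (hφd : ∀ t, HasDerivAt φ (-Real.sqrt (G (φ t))) t)
    (R : ℝ → ℝ)
    (hR : ∀ t, R t = -2 * (Real.exp (φ t - 1) - 1) / deriv φ t + 2 - n) :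
    Filter.Tendsto R Filter.atBot (𝓝 (-n)) := by
  obtain rfl : G = fun x => 2 * exp (x - 1) - 2 * x := funext hG
  have hlim := ((tendsto_exp_sub_one_div_neg_sqrt.comp
    (tendsto_atBot_nhdsLT_one_of_hasDerivAt_neg_sqrt hφ1 hφd)).const_mul (-2)).add_const (2 - n)
  rw [show -2 * 1 + (2 - n) = -n by ring] at hlim
  refine hlim.congr fun t => ?_
  rw [hR, (hφd t).deriv]
  simp only [Function.comp_apply]
  ring

theorem stmt_19 (n : ℝ) (G : ℝ → ℝ) (hG : ∀ x, G x = 2 * Real.exp (x - 1) - 2 * x)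
    (φ : ℝ → ℝ) (hφ1 : ∀ t, φ t < 1) (hφ0 : φ 0 = 0)
    (hφd : ∀ t, HasDerivAt φ (-Real.sqrt (G (φ t))) t)
    (R : ℝ → ℝ)
    (hR : ∀ t, R t = -2 * (Real.exp (φ t - 1) - 1) / deriv φ t + 2 - n) :
    Filter.Tendsto R Filter.atBot (𝓝 (-n)) :=
  stmt_19_general n G hG φ hφ1 hφd R hR
end
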